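/- arXiv:1605.01940 — 5 statements merged into one kernel-verified Lean document; each statement's English description precedes it below -/
import Mathlib

section
/- Let σ be a uniformly random permutation of {1,…,n-1} with n ≥ 5. With R(σ) = 1_{σ(1)<σ(2)} + Σ_{i=2}^{n-2} 1_{σ(i)<min(σ(i-1),σ(i+1))} + 1_{σ(n-1)<σ(n-2)}, the variance of R equals 2n/45. -/
/-- `permVal σ i` is the value at (1-based) position `i` of the permutation `σ` of
`{1, …, m}` (represented as a permutation of `Fin m`); values are in `{1, …, m}`. -/
def permVal {m : ℕ} (σ : Equiv.Perm (Fin m)) (i : ℕ) : ℕ :=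
  if h : i - 1 < m then (σ ⟨i - 1, h⟩ : ℕ) + 1 else 0

/-- The number of reflexive indicators
`R(σ) = 1_{σ(1)<σ(2)} + Σ_{i=2}^{n-2} 1_{σ(i)<min(σ(i-1),σ(i+1))} + 1_{σ(n-1)<σ(n-2)}`
for a permutation `σ` of `{1, …, n-1}`. -/
def reflCount (n : ℕ) (σ : Equiv.Perm (Fin (n - 1))) : ℕ :=
  (if permVal σ 1 < permVal σ 2 then 1 else 0) +
    (∑ i ∈ Finset.Icc 2 (n - 2),
      if permVal σ i < min (permVal σ (i - 1)) (permVal σ (i + 1)) then 1 else 0) +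
    (if permVal σ (n - 1) < permVal σ (n - 2) then 1 else 0)

open Finset Equiv

namespace RCaux

variable {k m : ℕ}

/-- rank of `f i` among the values of `f`. -/
def rk (f : Fin k → Fin m) (i : Fin k) : Fin k :=
  ⟨(Finset.univ.filter fun j => f j < f i).card, by
    have h1 : (Finset.univ.filter fun j => f j < f i) ⊆ Finset.univ.erase i := by
      intro j hj
      simp only [Finset.mem_filter] at hj
      refine Finset.mem_erase.2 ⟨?_, Finset.mem_univ _⟩
      rintro rfl; exact lt_irrefl _ hj.2
    have h2 := Finset.card_le_card h1
    have h3 : (Finset.univ.erase i).card < Finset.univ.card :=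
      Finset.card_erase_lt_of_mem (Finset.mem_univ i)
    have := lt_of_le_of_lt h2 h3
    simpa using this⟩

lemma rk_lt_rk {f : Fin k → Fin m} {i j : Fin k} (h : f i < f j) : rk f i < rk f j := by
  have hsub : (univ.filter fun l => f l < f i) ⊆ (univ.filter fun l => f l < f j) := by
    intro l hl
    simp only [Finset.mem_filter, Finset.mem_univ, true_and] at hl ⊢
    exact lt_trans hl h
  have : (univ.filter fun l => f l < f i) ⊂ (univ.filter fun l => f l < f j) := by
    rw [Finset.ssubset_iff_of_subset hsub]
    exact ⟨i, by simp [h], by simp⟩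
  exact Finset.card_lt_card this

lemma rk_lt_iff {f : Fin k → Fin m} (hf : Function.Injective f) {i j : Fin k} :
    rk f i < rk f j ↔ f i < f j := by
  constructor
  · intro h
    rcases lt_trichotomy (f i) (f j) with h' | h' | h'
    · exact h'
    · cases hf h'; exact absurd h (lt_irrefl _)
    · exact absurd h (not_lt.2 (le_of_lt (rk_lt_rk h')))
  · exact rk_lt_rk

lemma rk_injective {f : Fin k → Fin m} (hf : Function.Injective f) :
    Function.Injective (rk f) := by
  intro i j hij
  by_contra hne
  rcases Ne.lt_or_gt (fun h : f i = f j => hne (hf h)) with h | h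
  · exact absurd hij (ne_of_lt (rk_lt_rk h))
  · exact absurd hij.symm (ne_of_lt (rk_lt_rk h))

/-- rank permutation of an injective tuple. -/
noncomputable def rPerm (f : Fin k → Fin m) (hf : Function.Injective f) : Equiv.Perm (Fin k) :=
  Equiv.ofBijective (rk f) (Finite.injective_iff_bijective.mp (rk_injective hf))

@[simp] lemma rPerm_apply (f : Fin k → Fin m) (hf : Function.Injective f) (i : Fin k) :
    rPerm f hf i = rk f i := rfl

lemma rk_comp (f : Fin k → Fin m) (τ : Equiv.Perm (Fin k)) (i : Fin k) :
    rk (f ∘ ⇑τ) i = rk f (τ i) := by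
  apply Fin.ext
  show (univ.filter fun j => f (τ j) < f (τ i)).card = (univ.filter fun j => f j < f (τ i)).card
  rw [Finset.card_filter, Finset.card_filter]
  exact Fintype.sum_equiv τ _ _ (fun j => rfl)

lemma exists_perm_comp (p q : Fin k → Fin m) (hp : Function.Injective p)
    (hq : Function.Injective q) : ∃ e : Equiv.Perm (Fin m), ∀ i, e (p i) = q i := by
  classical
  have hc : Fintype.card ((Set.range p)ᶜ : Set (Fin m)) =
      Fintype.card ((Set.range q)ᶜ : Set (Fin m)) := by
    rw [Fintype.card_compl_set, Fintype.card_compl_set,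
      Set.card_range_of_injective hp, Set.card_range_of_injective hq]
  let b1 : (Set.range p : Set (Fin m)) ≃ (Set.range q : Set (Fin m)) :=
    (Equiv.ofInjective p hp).symm.trans (Equiv.ofInjective q hq)
  let b2 : ((Set.range p)ᶜ : Set (Fin m)) ≃ ((Set.range q)ᶜ : Set (Fin m)) :=
    Fintype.equivOfCardEq hc
  refine ⟨(Equiv.Set.sumCompl (Set.range p)).symm.trans
    ((b1.sumCongr b2).trans (Equiv.Set.sumCompl (Set.range q))), fun i => ?_⟩
  have hm : p i ∈ Set.range p := ⟨i, rfl⟩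
  simp only [Equiv.trans_apply, Equiv.Set.sumCompl_symm_apply_of_mem hm]
  simp [b1, Equiv.Set.sumCompl_apply_inl, Equiv.sumCongr_apply]

lemma master (p : Fin k → Fin m) (hp : Function.Injective p) (W : List (Fin k × Fin k)) :
    ∑ σ : Equiv.Perm (Fin m), (if ∀ q ∈ W, σ (p q.1) < σ (p q.2) then (1:ℚ) else 0)
      = (Nat.factorial m : ℚ) / (Nat.factorial k) *
        ((Finset.univ.filter fun π : Equiv.Perm (Fin k) => ∀ q ∈ W, π q.1 < π q.2).card) := by
  classical
  set N : ℚ := ((univ.filter fun π : Equiv.Perm (Fin k) => ∀ q ∈ W, π q.1 < π q.2).card : ℚ) with hN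
  set cnt : ℚ := ∑ σ : Equiv.Perm (Fin m),
    (if ∀ q ∈ W, σ (p q.1) < σ (p q.2) then (1:ℚ) else 0) with hcnt
  have hσp : ∀ σ : Equiv.Perm (Fin m), Function.Injective (⇑σ ∘ p) :=
    fun σ => σ.injective.comp hp
  have key : (Nat.factorial k : ℚ) * cnt = (Nat.factorial m : ℚ) * N := by
    have hD1 : ∀ σ : Equiv.Perm (Fin m),
        (∑ τ : Equiv.Perm (Fin k),
          if (∀ q ∈ W, rk (⇑σ ∘ p) (τ q.1) < rk (⇑σ ∘ p) (τ q.2)) then (1:ℚ) else 0) = N := by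
      intro σ
      set r : Equiv.Perm (Fin k) := rPerm (⇑σ ∘ p) (hσp σ) with hr
      have h1 : ∀ τ : Equiv.Perm (Fin k),
          (if (∀ q ∈ W, rk (⇑σ ∘ p) (τ q.1) < rk (⇑σ ∘ p) (τ q.2)) then (1:ℚ) else 0)
          = (if (∀ q ∈ W, (r * τ) q.1 < (r * τ) q.2) then (1:ℚ) else 0) := by
        intro τ
        rw [hr]
        simp only [Equiv.Perm.mul_apply, rPerm_apply]
        exact if_congr Iff.rfl rfl rfl
      rw [Finset.sum_congr rfl (fun τ _ => h1 τ)]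
      rw [Fintype.sum_bijective (fun τ : Equiv.Perm (Fin k) => r * τ)
        (Group.mulLeft_bijective r)
        (fun τ => if (∀ q ∈ W, (r * τ) q.1 < (r * τ) q.2) then (1:ℚ) else 0)
        (fun π => if (∀ q ∈ W, π q.1 < π q.2) then (1:ℚ) else 0)
        (fun τ => rfl)]
      rw [hN, Finset.sum_boole]
    have hD2 : ∀ τ : Equiv.Perm (Fin k),
        (∑ σ : Equiv.Perm (Fin m),
          if (∀ q ∈ W, rk (⇑σ ∘ p) (τ q.1) < rk (⇑σ ∘ p) (τ q.2)) then (1:ℚ) else 0) = cnt := by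
      intro τ
      obtain ⟨e, he⟩ := exists_perm_comp p (p ∘ ⇑τ) hp (hp.comp τ.injective)
      have h1 : ∀ σ : Equiv.Perm (Fin m),
          (if (∀ q ∈ W, rk (⇑σ ∘ p) (τ q.1) < rk (⇑σ ∘ p) (τ q.2)) then (1:ℚ) else 0)
          = (if (∀ q ∈ W, (σ * e) (p q.1) < (σ * e) (p q.2)) then (1:ℚ) else 0) := by
        intro σ
        congr 1
        apply propext
        constructor
        · intro h q hq
          have := h q hq
          rw [← rk_comp (⇑σ ∘ p) τ, ← rk_comp (⇑σ ∘ p) τ] at this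
          have h2 := (rk_lt_iff ((hσp σ).comp τ.injective)).mp this
          simpa [Equiv.Perm.mul_apply, he] using h2
        · intro h q hq
          have := h q hq
          simp only [Equiv.Perm.mul_apply, he] at this
          rw [← rk_comp (⇑σ ∘ p) τ, ← rk_comp (⇑σ ∘ p) τ]
          exact (rk_lt_iff ((hσp σ).comp τ.injective)).mpr this
      rw [Finset.sum_congr rfl (fun σ _ => h1 σ)]
      rw [hcnt]
      exact Fintype.sum_bijective (fun σ : Equiv.Perm (Fin m) => σ * e)
        (Group.mulRight_bijective e) _ _ (fun σ => rfl)
    have hA : ∑ σ : Equiv.Perm (Fin m), ∑ τ : Equiv.Perm (Fin k),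
        (if (∀ q ∈ W, rk (⇑σ ∘ p) (τ q.1) < rk (⇑σ ∘ p) (τ q.2)) then (1:ℚ) else 0)
        = (Nat.factorial m : ℚ) * N := by
      rw [Finset.sum_congr rfl (fun σ _ => hD1 σ)]
      simp [Fintype.card_perm]
    rw [← hA, Finset.sum_comm, Finset.sum_congr rfl (fun τ _ => hD2 τ)]
    simp [Fintype.card_perm]
  have hk : (Nat.factorial k : ℚ) ≠ 0 := by
    exact_mod_cast Nat.factorial_ne_zero k
  field_simp
  linarith [key]


def pp (M : ℕ) (i : ℕ) : Fin (M+4) := ⟨i % (M+4), Nat.mod_lt _ (by omega)⟩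

lemma pp_eq_iff {M i j : ℕ} (hi : i < M+4) (hj : j < M+4) : pp M i = pp M j ↔ i = j := by
  simp [pp, Fin.ext_iff, Nat.mod_eq_of_lt hi, Nat.mod_eq_of_lt hj]

def e1 (M : ℕ) (σ : Equiv.Perm (Fin (M+4))) : ℚ := if σ (pp M 0) < σ (pp M 1) then 1 else 0

def e2 (M : ℕ) (σ : Equiv.Perm (Fin (M+4))) : ℚ :=
  if σ (pp M (M+3)) < σ (pp M (M+2)) then 1 else 0

def xx (M t : ℕ) (σ : Equiv.Perm (Fin (M+4))) : ℚ :=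
  if σ (pp M (t+1)) < σ (pp M t) ∧ σ (pp M (t+1)) < σ (pp M (t+2)) then 1 else 0

@[simp] lemma vec6_four (a b c d e f : ℕ) : (![a,b,c,d,e,f] : Fin 6 → ℕ) 4 = e := rfl
@[simp] lemma vec6_five (a b c d e f : ℕ) : (![a,b,c,d,e,f] : Fin 6 → ℕ) 5 = f := rfl

lemma mul_indic (P Q : Prop) [Decidable P] [Decidable Q] :
    (if P then (1:ℚ) else 0) * (if Q then 1 else 0) = if P ∧ Q then 1 else 0 := by
  by_cases hP : P <;> by_cases hQ : Q <;> simp [hP, hQ]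

lemma sum_e1 (M t u : ℕ) (hd : 0 < 1) :
    ∑ σ : Equiv.Perm (Fin (M+4)), e1 M σ = (Nat.factorial (M+4) : ℚ) / 2 := by
  have hp : Function.Injective (fun a : Fin 2 => pp M (![0,1] a)) := by
    intro a b hab
    fin_cases a <;> fin_cases b <;> simp_all <;>
      first | rfl | (exfalso; rw [pp_eq_iff (by omega) (by omega)] at hab; omega)
  have hcard : (Finset.univ.filter fun π : Equiv.Perm (Fin 2) =>
      ∀ q ∈ [((0:Fin 2),(1:Fin 2))], π q.1 < π q.2).card = 1 := by decide
  have h := master (fun a : Fin 2 => pp M (![0,1] a)) hp [((0:Fin 2),(1:Fin 2))]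
  rw [hcard] at h
  have hsum : ∑ σ : Equiv.Perm (Fin (M+4)), e1 M σ
      = ∑ σ : Equiv.Perm (Fin (M+4)), (if ∀ q ∈ [((0:Fin 2),(1:Fin 2))],
          σ ((fun a : Fin 2 => pp M (![0,1] a)) q.1) <
          σ ((fun a : Fin 2 => pp M (![0,1] a)) q.2) then (1:ℚ) else 0) := by
    refine Finset.sum_congr rfl (fun σ _ => ?_)
    simp only [e1, mul_indic]
    refine if_congr ?_ rfl rfl
    simp
    all_goals tauto
  rw [hsum, h]
  norm_num [Nat.factorial]
  try ring


lemma sum_e2 (M t u : ℕ) (hd : 0 < 1) :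
    ∑ σ : Equiv.Perm (Fin (M+4)), e2 M σ = (Nat.factorial (M+4) : ℚ) / 2 := by
  have hp : Function.Injective (fun a : Fin 2 => pp M (![M+2,M+3] a)) := by
    intro a b hab
    fin_cases a <;> fin_cases b <;> simp_all <;>
      first | rfl | (exfalso; rw [pp_eq_iff (by omega) (by omega)] at hab; omega)
  have hcard : (Finset.univ.filter fun π : Equiv.Perm (Fin 2) =>
      ∀ q ∈ [((1:Fin 2),(0:Fin 2))], π q.1 < π q.2).card = 1 := by decide
  have h := master (fun a : Fin 2 => pp M (![M+2,M+3] a)) hp [((1:Fin 2),(0:Fin 2))]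
  rw [hcard] at h
  have hsum : ∑ σ : Equiv.Perm (Fin (M+4)), e2 M σ
      = ∑ σ : Equiv.Perm (Fin (M+4)), (if ∀ q ∈ [((1:Fin 2),(0:Fin 2))],
          σ ((fun a : Fin 2 => pp M (![M+2,M+3] a)) q.1) <
          σ ((fun a : Fin 2 => pp M (![M+2,M+3] a)) q.2) then (1:ℚ) else 0) := by
    refine Finset.sum_congr rfl (fun σ _ => ?_)
    simp only [e2, mul_indic]
    refine if_congr ?_ rfl rfl
    simp
    all_goals tauto
  rw [hsum, h]
  norm_num [Nat.factorial]
  try ring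


lemma sum_xx (M t u : ℕ) (ht : t + 2 < M + 4) :
    ∑ σ : Equiv.Perm (Fin (M+4)), xx M t σ = (Nat.factorial (M+4) : ℚ) / 3 := by
  have hp : Function.Injective (fun a : Fin 3 => pp M (![t,t+1,t+2] a)) := by
    intro a b hab
    fin_cases a <;> fin_cases b <;> simp_all <;>
      first | rfl | (exfalso; rw [pp_eq_iff (by omega) (by omega)] at hab; omega)
  have hcard : (Finset.univ.filter fun π : Equiv.Perm (Fin 3) =>
      ∀ q ∈ [((1:Fin 3),(0:Fin 3)),(1,2)], π q.1 < π q.2).card = 2 := by decide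
  have h := master (fun a : Fin 3 => pp M (![t,t+1,t+2] a)) hp [((1:Fin 3),(0:Fin 3)),(1,2)]
  rw [hcard] at h
  have hsum : ∑ σ : Equiv.Perm (Fin (M+4)), xx M t σ
      = ∑ σ : Equiv.Perm (Fin (M+4)), (if ∀ q ∈ [((1:Fin 3),(0:Fin 3)),(1,2)],
          σ ((fun a : Fin 3 => pp M (![t,t+1,t+2] a)) q.1) <
          σ ((fun a : Fin 3 => pp M (![t,t+1,t+2] a)) q.2) then (1:ℚ) else 0) := by
    refine Finset.sum_congr rfl (fun σ _ => ?_)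
    simp only [xx, mul_indic]
    refine if_congr ?_ rfl rfl
    simp
    all_goals tauto
  rw [hsum, h]
  norm_num [Nat.factorial]
  try ring


lemma sum_e1e2 (M t u : ℕ) (hd : 0 < 1) :
    ∑ σ : Equiv.Perm (Fin (M+4)), e1 M σ * e2 M σ = (Nat.factorial (M+4) : ℚ) / 4 := by
  have hp : Function.Injective (fun a : Fin 4 => pp M (![0,1,M+2,M+3] a)) := by
    intro a b hab
    fin_cases a <;> fin_cases b <;> simp_all <;>
      first | rfl | (exfalso; rw [pp_eq_iff (by omega) (by omega)] at hab; omega)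
  have hcard : (Finset.univ.filter fun π : Equiv.Perm (Fin 4) =>
      ∀ q ∈ [((0:Fin 4),(1:Fin 4)),(3,2)], π q.1 < π q.2).card = 6 := by decide
  have h := master (fun a : Fin 4 => pp M (![0,1,M+2,M+3] a)) hp [((0:Fin 4),(1:Fin 4)),(3,2)]
  rw [hcard] at h
  have hsum : ∑ σ : Equiv.Perm (Fin (M+4)), e1 M σ * e2 M σ
      = ∑ σ : Equiv.Perm (Fin (M+4)), (if ∀ q ∈ [((0:Fin 4),(1:Fin 4)),(3,2)],
          σ ((fun a : Fin 4 => pp M (![0,1,M+2,M+3] a)) q.1) <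
          σ ((fun a : Fin 4 => pp M (![0,1,M+2,M+3] a)) q.2) then (1:ℚ) else 0) := by
    refine Finset.sum_congr rfl (fun σ _ => ?_)
    simp only [e1, e2, mul_indic]
    refine if_congr ?_ rfl rfl
    simp
    all_goals tauto
  rw [hsum, h]
  norm_num [Nat.factorial]
  try ring


lemma sum_e1xx0 (M t u : ℕ) (hd : 0 < 1) :
    ∑ σ : Equiv.Perm (Fin (M+4)), e1 M σ * xx M 0 σ = (0:ℚ) := by
  have hp : Function.Injective (fun a : Fin 3 => pp M (![0,1,2] a)) := by
    intro a b hab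
    fin_cases a <;> fin_cases b <;> simp_all <;>
      first | rfl | (exfalso; rw [pp_eq_iff (by omega) (by omega)] at hab; omega)
  have hcard : (Finset.univ.filter fun π : Equiv.Perm (Fin 3) =>
      ∀ q ∈ [((0:Fin 3),(1:Fin 3)),(1,0),(1,2)], π q.1 < π q.2).card = 0 := by decide
  have h := master (fun a : Fin 3 => pp M (![0,1,2] a)) hp [((0:Fin 3),(1:Fin 3)),(1,0),(1,2)]
  rw [hcard] at h
  have hsum : ∑ σ : Equiv.Perm (Fin (M+4)), e1 M σ * xx M 0 σ
      = ∑ σ : Equiv.Perm (Fin (M+4)), (if ∀ q ∈ [((0:Fin 3),(1:Fin 3)),(1,0),(1,2)],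
          σ ((fun a : Fin 3 => pp M (![0,1,2] a)) q.1) <
          σ ((fun a : Fin 3 => pp M (![0,1,2] a)) q.2) then (1:ℚ) else 0) := by
    refine Finset.sum_congr rfl (fun σ _ => ?_)
    simp only [e1, xx, mul_indic]
    refine if_congr ?_ rfl rfl
    simp
    all_goals tauto
  rw [hsum, h]
  norm_num [Nat.factorial]
  try ring


lemma sum_e1xx1 (M t u : ℕ) (hd : 0 < 1) :
    ∑ σ : Equiv.Perm (Fin (M+4)), e1 M σ * xx M 1 σ = (Nat.factorial (M+4) : ℚ) * 5 / 24 := by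
  have hp : Function.Injective (fun a : Fin 4 => pp M (![0,1,2,3] a)) := by
    intro a b hab
    fin_cases a <;> fin_cases b <;> simp_all <;>
      first | rfl | (exfalso; rw [pp_eq_iff (by omega) (by omega)] at hab; omega)
  have hcard : (Finset.univ.filter fun π : Equiv.Perm (Fin 4) =>
      ∀ q ∈ [((0:Fin 4),(1:Fin 4)),(2,1),(2,3)], π q.1 < π q.2).card = 5 := by decide
  have h := master (fun a : Fin 4 => pp M (![0,1,2,3] a)) hp [((0:Fin 4),(1:Fin 4)),(2,1),(2,3)]
  rw [hcard] at h
  have hsum : ∑ σ : Equiv.Perm (Fin (M+4)), e1 M σ * xx M 1 σ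
      = ∑ σ : Equiv.Perm (Fin (M+4)), (if ∀ q ∈ [((0:Fin 4),(1:Fin 4)),(2,1),(2,3)],
          σ ((fun a : Fin 4 => pp M (![0,1,2,3] a)) q.1) <
          σ ((fun a : Fin 4 => pp M (![0,1,2,3] a)) q.2) then (1:ℚ) else 0) := by
    refine Finset.sum_congr rfl (fun σ _ => ?_)
    simp only [e1, xx, mul_indic]
    refine if_congr ?_ rfl rfl
    simp
    all_goals tauto
  rw [hsum, h]
  norm_num [Nat.factorial]
  try ring


set_option maxRecDepth 100000 in
set_option maxHeartbeats 1000000 in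
lemma sum_e1xxfar (M t u : ℕ) (h2 : 2 ≤ t) (ht : t + 2 < M + 4) :
    ∑ σ : Equiv.Perm (Fin (M+4)), e1 M σ * xx M t σ = (Nat.factorial (M+4) : ℚ) / 6 := by
  have hp : Function.Injective (fun a : Fin 5 => pp M (![0,1,t,t+1,t+2] a)) := by
    intro a b hab
    fin_cases a <;> fin_cases b <;> simp_all <;>
      first | rfl | (exfalso; rw [pp_eq_iff (by omega) (by omega)] at hab; omega)
  have hcard : (Finset.univ.filter fun π : Equiv.Perm (Fin 5) =>
      ∀ q ∈ [((0:Fin 5),(1:Fin 5)),(3,2),(3,4)], π q.1 < π q.2).card = 20 := by decide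
  have h := master (fun a : Fin 5 => pp M (![0,1,t,t+1,t+2] a)) hp [((0:Fin 5),(1:Fin 5)),(3,2),(3,4)]
  rw [hcard] at h
  have hsum : ∑ σ : Equiv.Perm (Fin (M+4)), e1 M σ * xx M t σ
      = ∑ σ : Equiv.Perm (Fin (M+4)), (if ∀ q ∈ [((0:Fin 5),(1:Fin 5)),(3,2),(3,4)],
          σ ((fun a : Fin 5 => pp M (![0,1,t,t+1,t+2] a)) q.1) <
          σ ((fun a : Fin 5 => pp M (![0,1,t,t+1,t+2] a)) q.2) then (1:ℚ) else 0) := by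
    refine Finset.sum_congr rfl (fun σ _ => ?_)
    simp only [e1, xx, mul_indic]
    refine if_congr ?_ rfl rfl
    simp
    all_goals tauto
  rw [hsum, h]
  norm_num [Nat.factorial]
  try ring


lemma sum_e2xxtop (M t u : ℕ) (hd : 0 < 1) :
    ∑ σ : Equiv.Perm (Fin (M+4)), e2 M σ * xx M (M+1) σ = (0:ℚ) := by
  have hp : Function.Injective (fun a : Fin 3 => pp M (![M+1,M+2,M+3] a)) := by
    intro a b hab
    fin_cases a <;> fin_cases b <;> simp_all <;>
      first | rfl | (exfalso; rw [pp_eq_iff (by omega) (by omega)] at hab; omega)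
  have hcard : (Finset.univ.filter fun π : Equiv.Perm (Fin 3) =>
      ∀ q ∈ [((2:Fin 3),(1:Fin 3)),(1,0),(1,2)], π q.1 < π q.2).card = 0 := by decide
  have h := master (fun a : Fin 3 => pp M (![M+1,M+2,M+3] a)) hp [((2:Fin 3),(1:Fin 3)),(1,0),(1,2)]
  rw [hcard] at h
  have hsum : ∑ σ : Equiv.Perm (Fin (M+4)), e2 M σ * xx M (M+1) σ
      = ∑ σ : Equiv.Perm (Fin (M+4)), (if ∀ q ∈ [((2:Fin 3),(1:Fin 3)),(1,0),(1,2)],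
          σ ((fun a : Fin 3 => pp M (![M+1,M+2,M+3] a)) q.1) <
          σ ((fun a : Fin 3 => pp M (![M+1,M+2,M+3] a)) q.2) then (1:ℚ) else 0) := by
    refine Finset.sum_congr rfl (fun σ _ => ?_)
    simp only [e2, xx, mul_indic]
    refine if_congr ?_ rfl rfl
    simp
    all_goals tauto
  rw [hsum, h]
  norm_num [Nat.factorial]
  try ring


lemma sum_e2xxM (M t u : ℕ) (hd : 0 < 1) :
    ∑ σ : Equiv.Perm (Fin (M+4)), e2 M σ * xx M M σ = (Nat.factorial (M+4) : ℚ) * 5 / 24 := by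
  have hp : Function.Injective (fun a : Fin 4 => pp M (![M,M+1,M+2,M+3] a)) := by
    intro a b hab
    fin_cases a <;> fin_cases b <;> simp_all <;>
      first | rfl | (exfalso; rw [pp_eq_iff (by omega) (by omega)] at hab; omega)
  have hcard : (Finset.univ.filter fun π : Equiv.Perm (Fin 4) =>
      ∀ q ∈ [((3:Fin 4),(2:Fin 4)),(1,0),(1,2)], π q.1 < π q.2).card = 5 := by decide
  have h := master (fun a : Fin 4 => pp M (![M,M+1,M+2,M+3] a)) hp [((3:Fin 4),(2:Fin 4)),(1,0),(1,2)]
  rw [hcard] at h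
  have hsum : ∑ σ : Equiv.Perm (Fin (M+4)), e2 M σ * xx M M σ
      = ∑ σ : Equiv.Perm (Fin (M+4)), (if ∀ q ∈ [((3:Fin 4),(2:Fin 4)),(1,0),(1,2)],
          σ ((fun a : Fin 4 => pp M (![M,M+1,M+2,M+3] a)) q.1) <
          σ ((fun a : Fin 4 => pp M (![M,M+1,M+2,M+3] a)) q.2) then (1:ℚ) else 0) := by
    refine Finset.sum_congr rfl (fun σ _ => ?_)
    simp only [e2, xx, mul_indic]
    refine if_congr ?_ rfl rfl
    simp
    all_goals tauto
  rw [hsum, h]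
  norm_num [Nat.factorial]
  try ring


set_option maxRecDepth 100000 in
set_option maxHeartbeats 1000000 in
lemma sum_e2xxfar (M t u : ℕ) (ht : t + 1 ≤ M) :
    ∑ σ : Equiv.Perm (Fin (M+4)), e2 M σ * xx M t σ = (Nat.factorial (M+4) : ℚ) / 6 := by
  have hp : Function.Injective (fun a : Fin 5 => pp M (![t,t+1,t+2,M+2,M+3] a)) := by
    intro a b hab
    fin_cases a <;> fin_cases b <;> simp_all <;>
      first | rfl | (exfalso; rw [pp_eq_iff (by omega) (by omega)] at hab; omega)
  have hcard : (Finset.univ.filter fun π : Equiv.Perm (Fin 5) =>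
      ∀ q ∈ [((4:Fin 5),(3:Fin 5)),(1,0),(1,2)], π q.1 < π q.2).card = 20 := by decide
  have h := master (fun a : Fin 5 => pp M (![t,t+1,t+2,M+2,M+3] a)) hp [((4:Fin 5),(3:Fin 5)),(1,0),(1,2)]
  rw [hcard] at h
  have hsum : ∑ σ : Equiv.Perm (Fin (M+4)), e2 M σ * xx M t σ
      = ∑ σ : Equiv.Perm (Fin (M+4)), (if ∀ q ∈ [((4:Fin 5),(3:Fin 5)),(1,0),(1,2)],
          σ ((fun a : Fin 5 => pp M (![t,t+1,t+2,M+2,M+3] a)) q.1) <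
          σ ((fun a : Fin 5 => pp M (![t,t+1,t+2,M+2,M+3] a)) q.2) then (1:ℚ) else 0) := by
    refine Finset.sum_congr rfl (fun σ _ => ?_)
    simp only [e2, xx, mul_indic]
    refine if_congr ?_ rfl rfl
    simp
    all_goals tauto
  rw [hsum, h]
  norm_num [Nat.factorial]
  try ring


lemma sum_xxadj (M t u : ℕ) (ht : t + 3 < M + 4) :
    ∑ σ : Equiv.Perm (Fin (M+4)), xx M t σ * xx M (t+1) σ = (0:ℚ) := by
  have hp : Function.Injective (fun a : Fin 4 => pp M (![t,t+1,t+2,t+3] a)) := by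
    intro a b hab
    fin_cases a <;> fin_cases b <;> simp_all <;>
      first | rfl | (exfalso; rw [pp_eq_iff (by omega) (by omega)] at hab; omega)
  have hcard : (Finset.univ.filter fun π : Equiv.Perm (Fin 4) =>
      ∀ q ∈ [((1:Fin 4),(0:Fin 4)),(1,2),(2,1),(2,3)], π q.1 < π q.2).card = 0 := by decide
  have h := master (fun a : Fin 4 => pp M (![t,t+1,t+2,t+3] a)) hp [((1:Fin 4),(0:Fin 4)),(1,2),(2,1),(2,3)]
  rw [hcard] at h
  have hsum : ∑ σ : Equiv.Perm (Fin (M+4)), xx M t σ * xx M (t+1) σ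
      = ∑ σ : Equiv.Perm (Fin (M+4)), (if ∀ q ∈ [((1:Fin 4),(0:Fin 4)),(1,2),(2,1),(2,3)],
          σ ((fun a : Fin 4 => pp M (![t,t+1,t+2,t+3] a)) q.1) <
          σ ((fun a : Fin 4 => pp M (![t,t+1,t+2,t+3] a)) q.2) then (1:ℚ) else 0) := by
    refine Finset.sum_congr rfl (fun σ _ => ?_)
    simp only [xx, mul_indic]
    refine if_congr ?_ rfl rfl
    simp
    all_goals tauto
  rw [hsum, h]
  norm_num [Nat.factorial]
  try ring


set_option maxRecDepth 100000 in
set_option maxHeartbeats 1000000 in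
lemma sum_xx2 (M t u : ℕ) (ht : t + 4 < M + 4) :
    ∑ σ : Equiv.Perm (Fin (M+4)), xx M t σ * xx M (t+2) σ = (Nat.factorial (M+4) : ℚ) * 2 / 15 := by
  have hp : Function.Injective (fun a : Fin 5 => pp M (![t,t+1,t+2,t+3,t+4] a)) := by
    intro a b hab
    fin_cases a <;> fin_cases b <;> simp_all <;>
      first | rfl | (exfalso; rw [pp_eq_iff (by omega) (by omega)] at hab; omega)
  have hcard : (Finset.univ.filter fun π : Equiv.Perm (Fin 5) =>
      ∀ q ∈ [((1:Fin 5),(0:Fin 5)),(1,2),(3,2),(3,4)], π q.1 < π q.2).card = 16 := by decide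
  have h := master (fun a : Fin 5 => pp M (![t,t+1,t+2,t+3,t+4] a)) hp [((1:Fin 5),(0:Fin 5)),(1,2),(3,2),(3,4)]
  rw [hcard] at h
  have hsum : ∑ σ : Equiv.Perm (Fin (M+4)), xx M t σ * xx M (t+2) σ
      = ∑ σ : Equiv.Perm (Fin (M+4)), (if ∀ q ∈ [((1:Fin 5),(0:Fin 5)),(1,2),(3,2),(3,4)],
          σ ((fun a : Fin 5 => pp M (![t,t+1,t+2,t+3,t+4] a)) q.1) <
          σ ((fun a : Fin 5 => pp M (![t,t+1,t+2,t+3,t+4] a)) q.2) then (1:ℚ) else 0) := by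
    refine Finset.sum_congr rfl (fun σ _ => ?_)
    simp only [xx, mul_indic]
    refine if_congr ?_ rfl rfl
    simp
    all_goals tauto
  rw [hsum, h]
  norm_num [Nat.factorial]
  try ring


set_option maxRecDepth 100000 in
set_option maxHeartbeats 1000000 in
lemma sum_xxfar (M t u : ℕ) (htu : t + 3 ≤ u) (hu : u + 2 < M + 4) :
    ∑ σ : Equiv.Perm (Fin (M+4)), xx M t σ * xx M u σ = (Nat.factorial (M+4) : ℚ) / 9 := by
  have hp : Function.Injective (fun a : Fin 6 => pp M (![t,t+1,t+2,u,u+1,u+2] a)) := by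
    intro a b hab
    fin_cases a <;> fin_cases b <;> simp_all <;>
      first | rfl | (exfalso; rw [pp_eq_iff (by omega) (by omega)] at hab; omega)
  have hcard : (Finset.univ.filter fun π : Equiv.Perm (Fin 6) =>
      ∀ q ∈ [((1:Fin 6),(0:Fin 6)),(1,2),(4,3),(4,5)], π q.1 < π q.2).card = 80 := by decide
  have h := master (fun a : Fin 6 => pp M (![t,t+1,t+2,u,u+1,u+2] a)) hp [((1:Fin 6),(0:Fin 6)),(1,2),(4,3),(4,5)]
  rw [hcard] at h
  have hsum : ∑ σ : Equiv.Perm (Fin (M+4)), xx M t σ * xx M u σ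
      = ∑ σ : Equiv.Perm (Fin (M+4)), (if ∀ q ∈ [((1:Fin 6),(0:Fin 6)),(1,2),(4,3),(4,5)],
          σ ((fun a : Fin 6 => pp M (![t,t+1,t+2,u,u+1,u+2] a)) q.1) <
          σ ((fun a : Fin 6 => pp M (![t,t+1,t+2,u,u+1,u+2] a)) q.2) then (1:ℚ) else 0) := by
    refine Finset.sum_congr rfl (fun σ _ => ?_)
    simp only [xx, mul_indic]
    refine if_congr ?_ rfl rfl
    simp
    all_goals tauto
  rw [hsum, h]
  norm_num [Nat.factorial]
  try ring


/-! ### Distance classification and double sum -/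

def v (d : ℕ) : ℚ := if d = 0 then 1/3 else if d = 1 then 0 else if d = 2 then 2/15 else 1/9

lemma v_big {d : ℕ} (hd : 3 ≤ d) : v d = 1/9 := by
  unfold v
  rw [if_neg (by omega), if_neg (by omega), if_neg (by omega)]

lemma indic_sq (P : Prop) [Decidable P] :
    (if P then (1:ℚ) else 0) * (if P then (1:ℚ) else 0) = if P then (1:ℚ) else 0 := by
  by_cases h : P <;> simp [h]

lemma xx_mul_self (M t : ℕ) (σ : Equiv.Perm (Fin (M+4))) :
    xx M t σ * xx M t σ = xx M t σ := by
  unfold xx; exact indic_sq _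

lemma Cval (M : ℕ) : ∀ t u : ℕ, t < M + 2 → u < M + 2 →
    ∑ σ : Equiv.Perm (Fin (M+4)), xx M t σ * xx M u σ
      = (Nat.factorial (M+4) : ℚ) * v (Nat.dist t u) := by
  have key : ∀ t u : ℕ, t ≤ u → t < M + 2 → u < M + 2 →
      ∑ σ : Equiv.Perm (Fin (M+4)), xx M t σ * xx M u σ
        = (Nat.factorial (M+4) : ℚ) * v (Nat.dist t u) := by
    intro t u htu ht hu
    rcases Nat.lt_or_ge (u - t) 3 with hd | hd
    · by_cases h0 : u = t
      · subst h0
        rw [Finset.sum_congr rfl (fun σ _ => xx_mul_self M u σ), sum_xx M u 0 (by omega)]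
        rw [Nat.dist_self]
        rw [show v 0 = 1/3 from rfl]
        ring
      by_cases h1 : u = t + 1
      · subst h1
        rw [sum_xxadj M t 0 (by omega)]
        have hh : Nat.dist t (t+1) = 1 := by simp [Nat.dist]
        rw [hh, show v 1 = 0 from rfl]
        ring
      · have h2 : u = t + 2 := by omega
        subst h2
        rw [sum_xx2 M t 0 (by omega)]
        have hh : Nat.dist t (t+2) = 2 := by simp [Nat.dist]
        rw [hh, show v 2 = 2/15 from rfl]
        ring
    · obtain ⟨d, rfl⟩ : ∃ d, u = t + d := ⟨u - t, by omega⟩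
      have hd3 : 3 ≤ d := by omega
      rw [sum_xxfar M t (t + d) (by omega) (by omega)]
      have hh : Nat.dist t (t + d) = d := by simp [Nat.dist]
      rw [hh, v_big hd3]
      ring
  intro t u ht hu
  rcases Nat.le_total t u with h | h
  · exact key t u h ht hu
  · rw [Finset.sum_congr rfl (fun σ _ => mul_comm (xx M t σ) (xx M u σ)), key u t h hu ht,
      Nat.dist_comm]

lemma sumv : ∀ L : ℕ, 2 ≤ L → ∑ u ∈ Finset.range L, v (L - u) = 2/15 + ((L : ℚ) - 2)/9 := by
  intro L
  induction L with
  | zero => omega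
  | succ L ih =>
    intro hL
    rcases Nat.lt_or_ge L 2 with h2 | h2
    · obtain rfl : L = 1 := by omega
      norm_num [Finset.sum_range_succ, v]
    · rw [Finset.sum_range_succ']
      have h1 : ∀ u ∈ Finset.range L, v (L + 1 - (u + 1)) = v (L - u) := by
        intro u hu
        congr 1
        omega
      rw [Finset.sum_congr rfl h1, ih h2]
      have h0 : v (L + 1 - 0) = 1/9 := v_big (by omega)
      rw [h0]
      push_cast
      ring

lemma sumGG : ∀ L : ℕ, 2 ≤ L →
    ∑ t ∈ Finset.range L, ∑ u ∈ Finset.range L, v (Nat.dist t u)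
      = (L : ℚ)/3 + (4*(L:ℚ)-8)/15 + ((L:ℚ)^2-5*(L:ℚ)+6)/9 := by
  intro L
  induction L with
  | zero => omega
  | succ L ih =>
    intro hL
    rcases Nat.lt_or_ge L 2 with h2 | h2
    · obtain rfl : L = 1 := by omega
      norm_num [Finset.sum_range_succ, v, Nat.dist]
    · rw [Finset.sum_range_succ]
      have hout : ∀ t ∈ Finset.range L,
          ∑ u ∈ Finset.range (L+1), v (Nat.dist t u)
            = (∑ u ∈ Finset.range L, v (Nat.dist t u)) + v (L - t) := by
        intro t ht
        rw [Finset.sum_range_succ]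
        congr 2
        exact Nat.dist_eq_sub_of_le (by simp at ht; omega)
      rw [Finset.sum_congr rfl hout, Finset.sum_add_distrib, ih h2]
      have hlast : ∑ u ∈ Finset.range (L+1), v (Nat.dist L u)
          = (2/15 + ((L:ℚ)-2)/9) + 1/3 := by
        rw [Finset.sum_range_succ]
        have h1 : ∀ u ∈ Finset.range L, v (Nat.dist L u) = v (L - u) := by
          intro u hu
          congr 1
          exact Nat.dist_eq_sub_of_le_right (by simp at hu; omega)
        rw [Finset.sum_congr rfl h1, sumv L h2]
        simp [Nat.dist_self, v]
      have hrow : ∑ t ∈ Finset.range L, v (L - t) = 2/15 + ((L:ℚ)-2)/9 := sumv L h2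
      rw [hlast, hrow]
      push_cast
      ring

/-! ### Moments -/

lemma mom1 (M : ℕ) :
    ∑ σ : Equiv.Perm (Fin (M+4)),
        (e1 M σ + (∑ t ∈ Finset.range (M+2), xx M t σ) + e2 M σ)
      = (Nat.factorial (M+4) : ℚ) * (M+5)/3 := by
  rw [Finset.sum_add_distrib, Finset.sum_add_distrib, sum_e1 M 0 0 Nat.one_pos,
    sum_e2 M 0 0 Nat.one_pos, Finset.sum_comm]
  have h : ∀ t ∈ Finset.range (M+2),
      ∑ σ : Equiv.Perm (Fin (M+4)), xx M t σ = (Nat.factorial (M+4) : ℚ) / 3 := by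
    intro t ht
    simp only [Finset.mem_range] at ht
    exact sum_xx M t 0 (by omega)
  rw [Finset.sum_congr rfl h, Finset.sum_const, Finset.card_range]
  push_cast
  ring

lemma sum_e1S (M : ℕ) :
    ∑ σ : Equiv.Perm (Fin (M+4)),
        e1 M σ * (∑ t ∈ Finset.range (M+2), xx M t σ)
      = (M : ℚ) * (Nat.factorial (M+4) : ℚ) / 6 + (Nat.factorial (M+4) : ℚ) * 5 / 24 := by
  have h : ∀ σ : Equiv.Perm (Fin (M+4)),
      e1 M σ * (∑ t ∈ Finset.range (M+2), xx M t σ)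
        = ∑ t ∈ Finset.range (M+2), e1 M σ * xx M t σ := fun σ => Finset.mul_sum _ _ _
  rw [Finset.sum_congr rfl (fun σ _ => h σ), Finset.sum_comm]
  rw [Finset.sum_range_succ', Finset.sum_range_succ']
  have h2 : ∀ t ∈ Finset.range M,
      ∑ σ : Equiv.Perm (Fin (M+4)), e1 M σ * xx M (t+1+1) σ
        = (Nat.factorial (M+4) : ℚ) / 6 := by
    intro t ht
    simp only [Finset.mem_range] at ht
    exact sum_e1xxfar M (t+2) 0 (by omega) (by omega)
  rw [Finset.sum_congr rfl h2, Finset.sum_const, Finset.card_range,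
    sum_e1xx1 M 0 0 Nat.one_pos, sum_e1xx0 M 0 0 Nat.one_pos]
  push_cast
  ring

lemma sum_e2S (M : ℕ) :
    ∑ σ : Equiv.Perm (Fin (M+4)),
        e2 M σ * (∑ t ∈ Finset.range (M+2), xx M t σ)
      = (M : ℚ) * (Nat.factorial (M+4) : ℚ) / 6 + (Nat.factorial (M+4) : ℚ) * 5 / 24 := by
  have h : ∀ σ : Equiv.Perm (Fin (M+4)),
      e2 M σ * (∑ t ∈ Finset.range (M+2), xx M t σ)
        = ∑ t ∈ Finset.range (M+2), e2 M σ * xx M t σ := fun σ => Finset.mul_sum _ _ _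
  rw [Finset.sum_congr rfl (fun σ _ => h σ), Finset.sum_comm]
  rw [Finset.sum_range_succ, Finset.sum_range_succ]
  have h2 : ∀ t ∈ Finset.range M,
      ∑ σ : Equiv.Perm (Fin (M+4)), e2 M σ * xx M t σ
        = (Nat.factorial (M+4) : ℚ) / 6 := by
    intro t ht
    simp only [Finset.mem_range] at ht
    exact sum_e2xxfar M t 0 (by omega)
  rw [Finset.sum_congr rfl h2, Finset.sum_const, Finset.card_range,
    sum_e2xxM M 0 0 Nat.one_pos, sum_e2xxtop M 0 0 Nat.one_pos]
  push_cast
  ring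

lemma sum_SS (M : ℕ) :
    ∑ σ : Equiv.Perm (Fin (M+4)),
        (∑ t ∈ Finset.range (M+2), xx M t σ) * (∑ t ∈ Finset.range (M+2), xx M t σ)
      = (Nat.factorial (M+4) : ℚ) *
          (((M:ℚ)+2)/3 + (4*((M:ℚ)+2)-8)/15 + (((M:ℚ)+2)^2-5*((M:ℚ)+2)+6)/9) := by
  have h : ∀ σ : Equiv.Perm (Fin (M+4)),
      (∑ t ∈ Finset.range (M+2), xx M t σ) * (∑ t ∈ Finset.range (M+2), xx M t σ)
        = ∑ t ∈ Finset.range (M+2), ∑ u ∈ Finset.range (M+2), xx M t σ * xx M u σ :=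
    fun σ => Finset.sum_mul_sum _ _ _ _
  rw [Finset.sum_congr rfl (fun σ _ => h σ), Finset.sum_comm]
  have h2 : ∀ t ∈ Finset.range (M+2),
      (∑ σ : Equiv.Perm (Fin (M+4)), ∑ u ∈ Finset.range (M+2), xx M t σ * xx M u σ)
        = (Nat.factorial (M+4) : ℚ) * ∑ u ∈ Finset.range (M+2), v (Nat.dist t u) := by
    intro t ht
    simp only [Finset.mem_range] at ht
    rw [Finset.sum_comm]
    rw [Finset.mul_sum]
    refine Finset.sum_congr rfl (fun u hu => ?_)
    simp only [Finset.mem_range] at hu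
    exact Cval M t u ht hu
  rw [Finset.sum_congr rfl h2, ← Finset.mul_sum]
  have h3 := sumGG (M+2) (by omega)
  rw [h3]
  push_cast
  ring

lemma e1_sq (M : ℕ) (σ : Equiv.Perm (Fin (M+4))) : e1 M σ * e1 M σ = e1 M σ := by
  unfold e1; exact indic_sq _

lemma e2_sq (M : ℕ) (σ : Equiv.Perm (Fin (M+4))) : e2 M σ * e2 M σ = e2 M σ := by
  unfold e2; exact indic_sq _

lemma mom2 (M : ℕ) :
    ∑ σ : Equiv.Perm (Fin (M+4)),
        (e1 M σ + (∑ t ∈ Finset.range (M+2), xx M t σ) + e2 M σ)^2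
      = (Nat.factorial (M+4) : ℚ) * (2*((M:ℚ)+5)/45 + ((M:ℚ)+5)^2/9) := by
  have hexp : ∀ σ : Equiv.Perm (Fin (M+4)),
      (e1 M σ + (∑ t ∈ Finset.range (M+2), xx M t σ) + e2 M σ)^2
        = e1 M σ * e1 M σ
          + (∑ t ∈ Finset.range (M+2), xx M t σ) * (∑ t ∈ Finset.range (M+2), xx M t σ)
          + e2 M σ * e2 M σ
          + 2 * (e1 M σ * (∑ t ∈ Finset.range (M+2), xx M t σ))
          + 2 * (e2 M σ * (∑ t ∈ Finset.range (M+2), xx M t σ))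
          + 2 * (e1 M σ * e2 M σ) := by
    intro σ
    ring
  rw [Finset.sum_congr rfl (fun σ _ => hexp σ)]
  rw [Finset.sum_add_distrib, Finset.sum_add_distrib, Finset.sum_add_distrib,
    Finset.sum_add_distrib, Finset.sum_add_distrib]
  rw [Finset.sum_congr rfl (fun σ _ => e1_sq M σ), Finset.sum_congr rfl (fun σ _ => e2_sq M σ)]
  rw [← Finset.mul_sum, ← Finset.mul_sum, ← Finset.mul_sum]
  rw [sum_e1 M 0 0 Nat.one_pos, sum_e2 M 0 0 Nat.one_pos, sum_SS M, sum_e1S M, sum_e2S M,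
    sum_e1e2 M 0 0 Nat.one_pos]
  push_cast
  ring

/-! ### Bridge to `reflCount` and the main theorem -/

lemma pp_eq {M i : ℕ} (h : i < M+4) : pp M i = ⟨i, h⟩ := by
  simp [pp, Fin.ext_iff, Nat.mod_eq_of_lt h]

lemma permVal_eq (M : ℕ) (σ : Equiv.Perm (Fin (M+4))) {i : ℕ} (h : i - 1 < M+4) :
    permVal σ i = (σ (pp M (i-1)) : ℕ) + 1 := by
  rw [permVal, dif_pos h, pp_eq h]

lemma cast_indic {P Q : Prop} [Decidable P] [Decidable Q] (h : P ↔ Q) :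
    (((if P then 1 else 0 : ℕ)) : ℚ) = if Q then (1:ℚ) else 0 := by
  by_cases hq : Q
  · rw [if_pos (h.mpr hq), if_pos hq, Nat.cast_one]
  · rw [if_neg (fun hp => hq (h.mp hp)), if_neg hq, Nat.cast_zero]

lemma reflCount_eq (M : ℕ) (σ : Equiv.Perm (Fin (M+4))) :
    (reflCount (M+5) σ : ℚ) = e1 M σ + (∑ t ∈ Finset.range (M+2), xx M t σ) + e2 M σ := by
  have hmid : ∀ t, t < M + 2 →
      (((if permVal σ (2+t) < min (permVal σ (2+t-1)) (permVal σ (2+t+1)) then 1 else 0 : ℕ)) : ℚ)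
        = xx M t σ := by
    intro t ht
    refine cast_indic ?_
    have i1 : 2+t-1 = t+1 := by omega
    have i2 : 2+t = t+2 := by omega
    have i3 : 2+t+1 = t+3 := by omega
    rw [i1, i3, i2, permVal_eq M σ (i := t+1) (by omega), permVal_eq M σ (i := t+2) (by omega),
      permVal_eq M σ (i := t+3) (by omega)]
    have j1 : t+1-1 = t := by omega
    have j2 : t+2-1 = t+1 := by omega
    have j3 : t+3-1 = t+2 := by omega
    rw [j1, j2, j3]
    show _ ↔ σ (pp M (t+1)) < σ (pp M t) ∧ σ (pp M (t+1)) < σ (pp M (t+2))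
    rw [lt_min_iff, Fin.lt_def, Fin.lt_def]
    omega
  have hA : (((if permVal σ 1 < permVal σ 2 then 1 else 0 : ℕ)) : ℚ) = e1 M σ := by
    refine cast_indic ?_
    rw [permVal_eq M σ (i := 1) (by omega), permVal_eq M σ (i := 2) (by omega)]
    have j1 : (1:ℕ)-1 = 0 := by omega
    have j2 : (2:ℕ)-1 = 1 := by omega
    rw [j1, j2]
    show _ ↔ σ (pp M 0) < σ (pp M 1)
    rw [Fin.lt_def]
    omega
  have hB : (((if permVal σ (M+4) < permVal σ (M+3) then 1 else 0 : ℕ)) : ℚ) = e2 M σ := by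
    refine cast_indic ?_
    rw [permVal_eq M σ (i := M+4) (by omega), permVal_eq M σ (i := M+3) (by omega)]
    have j1 : M+4-1 = M+3 := by omega
    have j2 : M+3-1 = M+2 := by omega
    rw [j1, j2]
    show _ ↔ σ (pp M (M+3)) < σ (pp M (M+2))
    rw [Fin.lt_def]
    omega
  show ((((if permVal σ 1 < permVal σ 2 then 1 else 0) +
      ∑ i ∈ Finset.Icc 2 (M+3),
        if permVal σ i < min (permVal σ (i - 1)) (permVal σ (i + 1)) then 1 else 0) +
      (if permVal σ (M+4) < permVal σ (M+3) then 1 else 0) : ℕ) : ℚ)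
    = e1 M σ + (∑ t ∈ Finset.range (M+2), xx M t σ) + e2 M σ
  rw [Nat.cast_add, Nat.cast_add, Nat.cast_sum]
  rw [← Finset.Ico_add_one_right_eq_Icc, Finset.sum_Ico_eq_sum_range]
  have hrange : M+3+1-2 = M+2 := by omega
  rw [hrange]
  rw [hA, hB, Finset.sum_congr rfl (fun t ht => hmid t (Finset.mem_range.mp ht))]

end RCaux

/-- For a uniformly random permutation `σ` of `{1, …, n-1}` with `n ≥ 5`, the variance
`E[R²] − (E[R])²` of the number of reflexive indicators `R` equals `2n/45`. -/
theorem variance_reflCount_eq (n : ℕ) (hn : 5 ≤ n) :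
    (∑ σ : Equiv.Perm (Fin (n - 1)), (reflCount n σ : ℚ) ^ 2) / (Nat.factorial (n - 1)) -
        ((∑ σ : Equiv.Perm (Fin (n - 1)), (reflCount n σ : ℚ)) / (Nat.factorial (n - 1))) ^ 2 =
      2 * (n : ℚ) / 45 := by
  obtain ⟨M, rfl⟩ : ∃ M, n = M + 5 := ⟨n - 5, by omega⟩
  show (∑ σ : Equiv.Perm (Fin (M+4)), (reflCount (M+5) σ : ℚ) ^ 2) / (Nat.factorial (M+4)) -
      ((∑ σ : Equiv.Perm (Fin (M+4)), (reflCount (M+5) σ : ℚ)) / (Nat.factorial (M+4))) ^ 2 =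
      2 * ((M+5 : ℕ) : ℚ) / 45
  have hF : ((Nat.factorial (M+4) : ℚ)) ≠ 0 :=
    Nat.cast_ne_zero.mpr (Nat.factorial_ne_zero _)
  have h1 : ∑ σ : Equiv.Perm (Fin (M+4)), (reflCount (M+5) σ : ℚ)
      = (Nat.factorial (M+4) : ℚ) * (M+5)/3 := by
    rw [← RCaux.mom1 M]
    exact Finset.sum_congr rfl (fun σ _ => RCaux.reflCount_eq M σ)
  have h2 : ∑ σ : Equiv.Perm (Fin (M+4)), (reflCount (M+5) σ : ℚ)^2
      = (Nat.factorial (M+4) : ℚ) * (2*((M:ℚ)+5)/45 + ((M:ℚ)+5)^2/9) := by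
    have : ∀ σ : Equiv.Perm (Fin (M+4)), (reflCount (M+5) σ : ℚ)^2
        = (RCaux.e1 M σ + (∑ t ∈ Finset.range (M+2), RCaux.xx M t σ) + RCaux.e2 M σ)^2 := by
      intro σ
      rw [RCaux.reflCount_eq M σ]
    rw [Finset.sum_congr rfl (fun σ _ => this σ), RCaux.mom2 M]
  rw [h1, h2]
  push_cast
  field_simp
  ring
end

section
/- Let σ be a uniformly random permutation of {1,…,n-2} with n ≥ 7. With Q(σ) = 1_{σ(2)<σ(3)} + Σ_{i=2}^{n-3} 1_{σ(i)<σ(i-1) and σ(i+1)<σ(i+2)} + 1_{σ(n-2)<σ(n-3)}, the variance of Q equals 19n/240. -/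
/-- The number of shared-NN indicators
`Q(σ) = 1_{σ(2)<σ(3)} + Σ_{i=2}^{n-3} 1_{σ(i)<σ(i-1) ∧ σ(i+1)<σ(i+2)} + 1_{σ(n-2)<σ(n-3)}`.
Since the definition of `Q` involves positions up to `n-1` (the term `i = n-3` compares
`σ(n-2)` with `σ(n-1)`), `σ` is a permutation of `{1, …, n-1}` (the spacing ranks), as in
the underlying paper. -/
def sharedCount (n : ℕ) (σ : Equiv.Perm (Fin (n - 1))) : ℕ :=
  (if permVal σ 2 < permVal σ 3 then 1 else 0) +
    (∑ i ∈ Finset.Icc 2 (n - 3),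
      if permVal σ i < permVal σ (i - 1) ∧ permVal σ (i + 1) < permVal σ (i + 2) then 1
      else 0) +
    (if permVal σ (n - 2) < permVal σ (n - 3) then 1 else 0)
open Equiv Finset

namespace SNN

lemma exists_rank {k N : ℕ} (y : Fin k → Fin N) (hy : Function.Injective y) :
    ∃ ρ : Equiv.Perm (Fin k), ∀ i j, (y i < y j ↔ ρ i < ρ j) := by
  classical
  have hcard : (Finset.univ.image y).card = k := by
    rw [Finset.card_image_of_injective _ hy, Finset.card_univ, Fintype.card_fin]
  set s := Finset.univ.image y with hs
  let φ := s.orderIsoOfFin hcard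
  have hmem : ∀ i, y i ∈ s := fun i => Finset.mem_image_of_mem _ (Finset.mem_univ i)
  let ρ0 : Fin k → Fin k := fun i => φ.symm ⟨y i, hmem i⟩
  have hρ0 : Function.Injective ρ0 := by
    intro i j h
    apply hy
    have h2 := φ.symm.injective h
    exact congrArg Subtype.val h2
  refine ⟨Equiv.ofBijective ρ0 (Finite.injective_iff_bijective.mp hρ0), fun i j => ?_⟩
  have : ρ0 i < ρ0 j ↔ (⟨y i, hmem i⟩ : s) < ⟨y j, hmem j⟩ := φ.symm.lt_iff_lt
  simp only [Equiv.ofBijective_apply]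
  rw [this, Subtype.mk_lt_mk]

lemma sum_pat_comp {k N : ℕ} (y : Fin k → Fin N) (hy : Function.Injective y)
    (g : (Fin k → Fin k → Bool) → ℕ) :
    ∑ τ : Equiv.Perm (Fin k), g (fun i j => decide (y (τ i) < y (τ j)))
      = ∑ τ : Equiv.Perm (Fin k), g (fun i j => decide (τ i < τ j)) := by
  obtain ⟨ρ, hρ⟩ := exists_rank y hy
  calc ∑ τ : Equiv.Perm (Fin k), g (fun i j => decide (y (τ i) < y (τ j)))
      = ∑ τ : Equiv.Perm (Fin k), g (fun i j => decide ((ρ * τ) i < (ρ * τ) j)) :=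
        Finset.sum_congr rfl fun τ _ => by
          congr 1; funext i j
          simp only [Equiv.Perm.mul_apply]
          exact decide_eq_decide.mpr (hρ (τ i) (τ j))
    _ = ∑ τ : Equiv.Perm (Fin k), g (fun i j => decide (τ i < τ j)) :=
        Fintype.sum_equiv (Equiv.mulLeft ρ) _ _ (fun τ => rfl)

lemma master1 {N k : ℕ} (e : Fin k ↪ Fin N) (g : (Fin k → Fin k → Bool) → ℕ) :
    k.factorial * ∑ σ : Equiv.Perm (Fin N), g (fun i j => decide (σ (e i) < σ (e j)))
      = N.factorial * ∑ τ : Equiv.Perm (Fin k), g (fun i j => decide (τ i < τ j)) := by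
  have key : ∀ τ : Equiv.Perm (Fin k),
      ∑ σ : Equiv.Perm (Fin N), g (fun i j => decide (σ (e i) < σ (e j)))
      = ∑ σ : Equiv.Perm (Fin N), g (fun i j => decide (σ (e (τ i)) < σ (e (τ j)))) := by
    intro τ
    apply Fintype.sum_equiv (Equiv.mulRight ((τ⁻¹).viaEmbedding e))
    intro σ
    congr 1; funext i j
    show decide (σ _ < σ _) = _
    simp only [Equiv.coe_mulRight, Equiv.Perm.mul_apply, Equiv.Perm.viaEmbedding_apply,
      Equiv.Perm.coe_inv, Equiv.symm_apply_apply]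
  calc k.factorial * ∑ σ : Equiv.Perm (Fin N), g (fun i j => decide (σ (e i) < σ (e j)))
      = ∑ τ : Equiv.Perm (Fin k), ∑ σ : Equiv.Perm (Fin N),
          g (fun i j => decide (σ (e (τ i)) < σ (e (τ j)))) := by
        rw [Finset.sum_congr rfl (fun τ _ => (key τ).symm), Finset.sum_const, Finset.card_univ,
          Fintype.card_perm, Fintype.card_fin, smul_eq_mul]
    _ = ∑ σ : Equiv.Perm (Fin N), ∑ τ : Equiv.Perm (Fin k),
          g (fun i j => decide (σ (e (τ i)) < σ (e (τ j)))) := Finset.sum_comm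
    _ = ∑ σ : Equiv.Perm (Fin N), ∑ τ : Equiv.Perm (Fin k),
          g (fun i j => decide (τ i < τ j)) :=
        Finset.sum_congr rfl fun σ _ =>
          sum_pat_comp (fun x => σ (e x)) (σ.injective.comp e.injective) g
    _ = N.factorial * ∑ τ : Equiv.Perm (Fin k), g (fun i j => decide (τ i < τ j)) := by
        rw [Finset.sum_const, Finset.card_univ, Fintype.card_perm, Fintype.card_fin, smul_eq_mul]

lemma ite_one_mul_ite_one (P Q : Prop) [Decidable P] [Decidable Q] :
    (if P then (1:ℕ) else 0) * (if Q then 1 else 0) = if P ∧ Q then 1 else 0 := by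
  by_cases hP : P <;> by_cases hQ : Q <;> simp_all

lemma master2{N k1 k2 : ℕ} (e1 : Fin k1 ↪ Fin N) (e2 : Fin k2 ↪ Fin N)
    (hd : ∀ i j, e1 i ≠ e2 j)
    (g1 : (Fin k1 → Fin k1 → Bool) → ℕ) (g2 : (Fin k2 → Fin k2 → Bool) → ℕ) :
    (k1.factorial * k2.factorial) * ∑ σ : Equiv.Perm (Fin N),
        g1 (fun i j => decide (σ (e1 i) < σ (e1 j)))
          * g2 (fun i j => decide (σ (e2 i) < σ (e2 j)))
      = N.factorial * ((∑ τ : Equiv.Perm (Fin k1), g1 (fun i j => decide (τ i < τ j)))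
          * (∑ τ : Equiv.Perm (Fin k2), g2 (fun i j => decide (τ i < τ j)))) := by
  have key : ∀ (τ1 : Equiv.Perm (Fin k1)) (τ2 : Equiv.Perm (Fin k2)),
      ∑ σ : Equiv.Perm (Fin N),
        g1 (fun i j => decide (σ (e1 i) < σ (e1 j)))
          * g2 (fun i j => decide (σ (e2 i) < σ (e2 j)))
      = ∑ σ : Equiv.Perm (Fin N),
        g1 (fun i j => decide (σ (e1 (τ1 i)) < σ (e1 (τ1 j))))
          * g2 (fun i j => decide (σ (e2 (τ2 i)) < σ (e2 (τ2 j)))) := by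
    intro τ1 τ2
    apply Fintype.sum_equiv
      (Equiv.mulRight ((τ1⁻¹).viaEmbedding e1 * (τ2⁻¹).viaEmbedding e2))
    intro σ
    have h1 : ∀ i : Fin k1,
        ((τ1⁻¹).viaEmbedding e1 * (τ2⁻¹).viaEmbedding e2) (e1 (τ1 i)) = e1 i := by
      intro i
      rw [Equiv.Perm.mul_apply,
        Equiv.Perm.viaEmbedding_apply_of_notMem (τ2⁻¹) e2 _ (by
          rintro ⟨x, hx⟩; exact hd (τ1 i) x hx.symm),
        Equiv.Perm.viaEmbedding_apply, Equiv.Perm.coe_inv, Equiv.symm_apply_apply]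
    have h2 : ∀ i : Fin k2,
        ((τ1⁻¹).viaEmbedding e1 * (τ2⁻¹).viaEmbedding e2) (e2 (τ2 i)) = e2 i := by
      intro i
      rw [Equiv.Perm.mul_apply, Equiv.Perm.viaEmbedding_apply, Equiv.Perm.coe_inv, Equiv.symm_apply_apply,
        Equiv.Perm.viaEmbedding_apply_of_notMem (τ1⁻¹) e1 _ (by
          rintro ⟨x, hx⟩; exact hd x i hx)]
    simp only [show ∀ x : Fin N,
        (Equiv.mulRight ((τ1⁻¹).viaEmbedding e1 * (τ2⁻¹).viaEmbedding e2) σ) x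
          = σ (((τ1⁻¹).viaEmbedding e1 * (τ2⁻¹).viaEmbedding e2) x) from fun x => rfl, h1, h2]
  calc (k1.factorial * k2.factorial) * ∑ σ : Equiv.Perm (Fin N),
        g1 (fun i j => decide (σ (e1 i) < σ (e1 j)))
          * g2 (fun i j => decide (σ (e2 i) < σ (e2 j)))
      = ∑ τ1 : Equiv.Perm (Fin k1), ∑ τ2 : Equiv.Perm (Fin k2), ∑ σ : Equiv.Perm (Fin N),
          g1 (fun i j => decide (σ (e1 (τ1 i)) < σ (e1 (τ1 j))))
            * g2 (fun i j => decide (σ (e2 (τ2 i)) < σ (e2 (τ2 j)))) := by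
        rw [Finset.sum_congr rfl (fun τ1 _ => Finset.sum_congr rfl
          (fun τ2 _ => (key τ1 τ2).symm))]
        simp only [Finset.sum_const, Finset.card_univ, Fintype.card_perm, Fintype.card_fin,
          smul_eq_mul]
        ring
    _ = ∑ σ : Equiv.Perm (Fin N), ∑ τ1 : Equiv.Perm (Fin k1), ∑ τ2 : Equiv.Perm (Fin k2),
          g1 (fun i j => decide (σ (e1 (τ1 i)) < σ (e1 (τ1 j))))
            * g2 (fun i j => decide (σ (e2 (τ2 i)) < σ (e2 (τ2 j)))) := by
        rw [Finset.sum_congr rfl (fun τ1 (_ : τ1 ∈ Finset.univ) => Finset.sum_comm), Finset.sum_comm]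
    _ = ∑ σ : Equiv.Perm (Fin N),
          ((∑ τ : Equiv.Perm (Fin k1), g1 (fun i j => decide (τ i < τ j)))
          * (∑ τ : Equiv.Perm (Fin k2), g2 (fun i j => decide (τ i < τ j)))) := by
        refine Finset.sum_congr rfl fun σ _ => ?_
        rw [← Finset.sum_mul_sum]
        congr 1
        · exact sum_pat_comp (fun x => σ (e1 x)) (σ.injective.comp e1.injective) g1
        · exact sum_pat_comp (fun x => σ (e2 x)) (σ.injective.comp e2.injective) g2
    _ = N.factorial * ((∑ τ : Equiv.Perm (Fin k1), g1 (fun i j => decide (τ i < τ j)))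
          * (∑ τ : Equiv.Perm (Fin k2), g2 (fun i j => decide (τ i < τ j)))) := by
        rw [Finset.sum_const, Finset.card_univ, Fintype.card_perm, Fintype.card_fin, smul_eq_mul]
set_option maxRecDepth 40000

lemma c2 {N : ℕ} (a b : Fin N) (hab : a ≠ b) :
    2 * ∑ σ : Equiv.Perm (Fin N), (if σ a < σ b then 1 else 0) = 1 * N.factorial := by
  have hinj : Function.Injective ![a, b] := by
    intro i j hij; fin_cases i <;> fin_cases j <;> simp_all
  have h := master1 (⟨![a, b], hinj⟩ : Fin 2 ↪ Fin N) (fun p => cond (p 0 1) 1 0)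
  simp only [← Bool.decide_and, Bool.cond_decide, ite_one_mul_ite_one] at h
  simp only [Function.Embedding.coeFn_mk, Matrix.cons_val_zero, Matrix.cons_val_one,
    Matrix.head_cons, Bool.cond_decide] at h
  rw [show Nat.factorial 2 = 2 from rfl,
    show ∑ τ : Equiv.Perm (Fin 2), (if τ 0 < τ 1 then 1 else 0) = 1 by decide] at h
  have h : 2 * ∑ σ : Equiv.Perm (Fin N), (if σ a < σ b then 1 else 0) = N.factorial * 1 := h
  omega

lemma c4 {N : ℕ} (a b c d : Fin N) (hab : a ≠ b) (hac : a ≠ c) (had : a ≠ d)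
    (hbc : b ≠ c) (hbd : b ≠ d) (hcd : c ≠ d) :
    24 * ∑ σ : Equiv.Perm (Fin N), (if σ a < σ b ∧ σ c < σ d then 1 else 0)
      = 6 * N.factorial := by
  have hinj : Function.Injective ![a, b, c, d] := by
    intro i j hij; fin_cases i <;> fin_cases j <;> simp_all
  have h := master1 (⟨![a, b, c, d], hinj⟩ : Fin 4 ↪ Fin N)
    (fun p => cond (p 0 1 && p 2 3) 1 0)
  simp only [← Bool.decide_and, Bool.cond_decide, ite_one_mul_ite_one] at h
  simp only [Function.Embedding.coeFn_mk, Matrix.cons_val_zero, Matrix.cons_val_one,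
    Matrix.head_cons, Matrix.cons_val_two, Matrix.tail_cons, Matrix.cons_val_three,
    ← Bool.decide_and, Bool.cond_decide] at h
  rw [show Nat.factorial 4 = 24 from rfl,
    show ∑ τ : Equiv.Perm (Fin 4), (if τ 0 < τ 1 ∧ τ 2 < τ 3 then 1 else 0) = 6 by decide] at h
  omega

lemma c4b {N : ℕ} (a b c d : Fin N) (hab : a ≠ b) (hac : a ≠ c) (had : a ≠ d)
    (hbc : b ≠ c) (hbd : b ≠ d) (hcd : c ≠ d) :
    24 * ∑ σ : Equiv.Perm (Fin N), (if σ a < σ b ∧ σ a < σ c ∧ σ b < σ d then 1 else 0)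
      = 3 * N.factorial := by
  have hinj : Function.Injective ![a, b, c, d] := by
    intro i j hij; fin_cases i <;> fin_cases j <;> simp_all
  have h := master1 (⟨![a, b, c, d], hinj⟩ : Fin 4 ↪ Fin N)
    (fun p => cond (p 0 1 && (p 0 2 && p 1 3)) 1 0)
  simp only [← Bool.decide_and, Bool.cond_decide, ite_one_mul_ite_one] at h
  simp only [Function.Embedding.coeFn_mk, Matrix.cons_val_zero, Matrix.cons_val_one,
    Matrix.head_cons, Matrix.cons_val_two, Matrix.tail_cons, Matrix.cons_val_three,
    ← Bool.decide_and, Bool.cond_decide] at h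
  rw [show Nat.factorial 4 = 24 from rfl,
    show ∑ τ : Equiv.Perm (Fin 4), (if τ 0 < τ 1 ∧ τ 0 < τ 2 ∧ τ 1 < τ 3 then 1 else 0) = 3
      by decide] at h
  omega

lemma c4c {N : ℕ} (a b c d : Fin N) (hab : a ≠ b) (hac : a ≠ c) (had : a ≠ d)
    (hbc : b ≠ c) (hbd : b ≠ d) (hcd : c ≠ d) :
    24 * ∑ σ : Equiv.Perm (Fin N), (if σ a < σ b ∧ σ b < σ c ∧ σ a < σ d then 1 else 0)
      = 3 * N.factorial := by
  have hinj : Function.Injective ![a, b, c, d] := by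
    intro i j hij; fin_cases i <;> fin_cases j <;> simp_all
  have h := master1 (⟨![a, b, c, d], hinj⟩ : Fin 4 ↪ Fin N)
    (fun p => cond (p 0 1 && (p 1 2 && p 0 3)) 1 0)
  simp only [← Bool.decide_and, Bool.cond_decide, ite_one_mul_ite_one] at h
  simp only [Function.Embedding.coeFn_mk, Matrix.cons_val_zero, Matrix.cons_val_one,
    Matrix.head_cons, Matrix.cons_val_two, Matrix.tail_cons, Matrix.cons_val_three,
    ← Bool.decide_and, Bool.cond_decide] at h
  rw [show Nat.factorial 4 = 24 from rfl,
    show ∑ τ : Equiv.Perm (Fin 4), (if τ 0 < τ 1 ∧ τ 1 < τ 2 ∧ τ 0 < τ 3 then 1 else 0) = 3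
      by decide] at h
  omega

lemma c5 {N : ℕ} (a b c d e : Fin N) (hab : a ≠ b) (hac : a ≠ c) (had : a ≠ d) (hae : a ≠ e)
    (hbc : b ≠ c) (hbd : b ≠ d) (hbe : b ≠ e) (hcd : c ≠ d) (hce : c ≠ e) (hde : d ≠ e) :
    120 * ∑ σ : Equiv.Perm (Fin N),
        (if (σ a < σ b ∧ σ c < σ d) ∧ (σ c < σ a ∧ σ d < σ e) then 1 else 0)
      = 6 * N.factorial := by
  have hinj : Function.Injective ![a, b, c, d, e] := by
    intro i j hij; fin_cases i <;> fin_cases j <;> simp_all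
  have h := master1 (⟨![a, b, c, d, e], hinj⟩ : Fin 5 ↪ Fin N)
    (fun p => cond ((p 0 1 && p 2 3) && (p 2 0 && p 3 4)) 1 0)
  simp only [← Bool.decide_and, Bool.cond_decide, ite_one_mul_ite_one] at h
  simp only [Function.Embedding.coeFn_mk, Matrix.cons_val_zero, Matrix.cons_val_one,
    Matrix.head_cons, Matrix.cons_val_two, Matrix.tail_cons, Matrix.cons_val_three,
    Matrix.cons_val_four, ← Bool.decide_and, Bool.cond_decide] at h
  rw [show Nat.factorial 5 = 120 from rfl,
    show ∑ τ : Equiv.Perm (Fin 5),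
        (if (τ 0 < τ 1 ∧ τ 2 < τ 3) ∧ (τ 2 < τ 0 ∧ τ 3 < τ 4) then 1 else 0) = 6 by decide] at h
  omega

lemma c2_4 {N : ℕ} (a b c d e f : Fin N)
    (h1 : a ≠ b)
    (h2 : c ≠ d) (h3 : c ≠ e) (h4 : c ≠ f) (h5 : d ≠ e) (h6 : d ≠ f) (h7 : e ≠ f)
    (x1 : a ≠ c) (x2 : a ≠ d) (x3 : a ≠ e) (x4 : a ≠ f)
    (x5 : b ≠ c) (x6 : b ≠ d) (x7 : b ≠ e) (x8 : b ≠ f) :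
    48 * ∑ σ : Equiv.Perm (Fin N),
        (if σ a < σ b ∧ (σ c < σ d ∧ σ e < σ f) then 1 else 0)
      = 6 * N.factorial := by
  have hinj1 : Function.Injective ![a, b] := by
    intro i j hij; fin_cases i <;> fin_cases j <;> simp_all
  have hinj2 : Function.Injective ![c, d, e, f] := by
    intro i j hij; fin_cases i <;> fin_cases j <;> simp_all
  have hd : ∀ (i : Fin 2) (j : Fin 4), (![a, b] : Fin 2 → Fin N) i ≠ ![c, d, e, f] j := by
    intro i j; fin_cases i <;> fin_cases j <;> simp_all
  have h := master2 (⟨![a, b], hinj1⟩ : Fin 2 ↪ Fin N) (⟨![c, d, e, f], hinj2⟩ : Fin 4 ↪ Fin N)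
    hd (fun p => cond (p 0 1) 1 0) (fun p => cond (p 0 1 && p 2 3) 1 0)
  simp only [← Bool.decide_and, Bool.cond_decide, ite_one_mul_ite_one] at h
  simp only [Function.Embedding.coeFn_mk, Matrix.cons_val_zero, Matrix.cons_val_one,
    Matrix.head_cons, Matrix.cons_val_two, Matrix.tail_cons, Matrix.cons_val_three,
    ← Bool.decide_and, Bool.cond_decide, ite_one_mul_ite_one] at h
  rw [show Nat.factorial 2 * Nat.factorial 4 = 48 from rfl,
    show ∑ τ : Equiv.Perm (Fin 2), (if τ 0 < τ 1 then 1 else 0) = 1 by decide,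
    show ∑ τ : Equiv.Perm (Fin 4), (if τ 0 < τ 1 ∧ τ 2 < τ 3 then 1 else 0) = 6 by decide] at h
  omega

lemma c3_2A {N : ℕ} (a b c d e : Fin N)
    (h1 : a ≠ b) (h2 : a ≠ c) (h3 : b ≠ c) (h4 : d ≠ e)
    (x1 : a ≠ d) (x2 : a ≠ e) (x3 : b ≠ d) (x4 : b ≠ e) (x5 : c ≠ d) (x6 : c ≠ e) :
    12 * ∑ σ : Equiv.Perm (Fin N),
        (if σ a < σ b ∧ (σ c < σ b ∧ σ d < σ e) then 1 else 0)
      = 2 * N.factorial := by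
  have hinj1 : Function.Injective ![a, b, c] := by
    intro i j hij; fin_cases i <;> fin_cases j <;> simp_all
  have hinj2 : Function.Injective ![d, e] := by
    intro i j hij; fin_cases i <;> fin_cases j <;> simp_all
  have hd : ∀ (i : Fin 3) (j : Fin 2), (![a, b, c] : Fin 3 → Fin N) i ≠ ![d, e] j := by
    intro i j; fin_cases i <;> fin_cases j <;> simp_all
  have h := master2 (⟨![a, b, c], hinj1⟩ : Fin 3 ↪ Fin N) (⟨![d, e], hinj2⟩ : Fin 2 ↪ Fin N)
    hd (fun p => cond (p 0 1 && p 2 1) 1 0) (fun p => cond (p 0 1) 1 0)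
  simp only [← Bool.decide_and, Bool.cond_decide, ite_one_mul_ite_one] at h
  simp only [Function.Embedding.coeFn_mk, Matrix.cons_val_zero, Matrix.cons_val_one,
    Matrix.head_cons, Matrix.cons_val_two, Matrix.tail_cons,
    ← Bool.decide_and, Bool.cond_decide, ite_one_mul_ite_one] at h
  rw [show Nat.factorial 3 * Nat.factorial 2 = 12 from rfl,
    show ∑ τ : Equiv.Perm (Fin 3), (if τ 0 < τ 1 ∧ τ 2 < τ 1 then 1 else 0) = 2 by decide,
    show ∑ τ : Equiv.Perm (Fin 2), (if τ 0 < τ 1 then 1 else 0) = 1 by decide] at h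
  rw [Finset.sum_congr rfl fun σ _ => if_congr
    (show (σ a < σ b ∧ (σ c < σ b ∧ σ d < σ e)) ↔ ((σ a < σ b ∧ σ c < σ b) ∧ σ d < σ e)
      by tauto) rfl rfl]
  omega

lemma c3_2C {N : ℕ} (a b c d e : Fin N)
    (h1 : a ≠ b) (h2 : a ≠ e) (h3 : b ≠ e) (h4 : c ≠ d)
    (x1 : a ≠ c) (x2 : a ≠ d) (x3 : b ≠ c) (x4 : b ≠ d) (x5 : e ≠ c) (x6 : e ≠ d) :
    12 * ∑ σ : Equiv.Perm (Fin N),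
        (if σ a < σ b ∧ (σ c < σ d ∧ σ e < σ b) then 1 else 0)
      = 2 * N.factorial := by
  have hinj1 : Function.Injective ![a, b, e] := by
    intro i j hij; fin_cases i <;> fin_cases j <;> simp_all
  have hinj2 : Function.Injective ![c, d] := by
    intro i j hij; fin_cases i <;> fin_cases j <;> simp_all
  have hd : ∀ (i : Fin 3) (j : Fin 2), (![a, b, e] : Fin 3 → Fin N) i ≠ ![c, d] j := by
    intro i j; fin_cases i <;> fin_cases j <;> simp_all
  have h := master2 (⟨![a, b, e], hinj1⟩ : Fin 3 ↪ Fin N) (⟨![c, d], hinj2⟩ : Fin 2 ↪ Fin N)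
    hd (fun p => cond (p 0 1 && p 2 1) 1 0) (fun p => cond (p 0 1) 1 0)
  simp only [← Bool.decide_and, Bool.cond_decide, ite_one_mul_ite_one] at h
  simp only [Function.Embedding.coeFn_mk, Matrix.cons_val_zero, Matrix.cons_val_one,
    Matrix.head_cons, Matrix.cons_val_two, Matrix.tail_cons,
    ← Bool.decide_and, Bool.cond_decide, ite_one_mul_ite_one] at h
  rw [show Nat.factorial 3 * Nat.factorial 2 = 12 from rfl,
    show ∑ τ : Equiv.Perm (Fin 3), (if τ 0 < τ 1 ∧ τ 2 < τ 1 then 1 else 0) = 2 by decide,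
    show ∑ τ : Equiv.Perm (Fin 2), (if τ 0 < τ 1 then 1 else 0) = 1 by decide] at h
  rw [Finset.sum_congr rfl fun σ _ => if_congr
    (show (σ a < σ b ∧ (σ c < σ d ∧ σ e < σ b)) ↔ ((σ a < σ b ∧ σ e < σ b) ∧ σ c < σ d)
      by tauto) rfl rfl]
  omega

lemma c2_5 {N : ℕ} (a b c d e f g : Fin N)
    (h1 : a ≠ b)
    (h2 : c ≠ d) (h3 : c ≠ e) (h4 : c ≠ f) (h5 : c ≠ g) (h6 : d ≠ e) (h7 : d ≠ f)
    (h8 : d ≠ g) (h9 : e ≠ f) (h10 : e ≠ g) (h11 : f ≠ g)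
    (x1 : a ≠ c) (x2 : a ≠ d) (x3 : a ≠ e) (x4 : a ≠ f) (x5 : a ≠ g)
    (x6 : b ≠ c) (x7 : b ≠ d) (x8 : b ≠ e) (x9 : b ≠ f) (x10 : b ≠ g) :
    240 * ∑ σ : Equiv.Perm (Fin N),
        (if (σ a < σ b ∧ σ c < σ d) ∧ (σ e < σ d ∧ σ f < σ g) then 1 else 0)
      = 20 * N.factorial := by
  have hinj1 : Function.Injective ![a, b] := by
    intro i j hij; fin_cases i <;> fin_cases j <;> simp_all
  have hinj2 : Function.Injective ![c, d, e, f, g] := by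
    intro i j hij; fin_cases i <;> fin_cases j <;> simp_all
  have hd : ∀ (i : Fin 2) (j : Fin 5), (![a, b] : Fin 2 → Fin N) i ≠ ![c, d, e, f, g] j := by
    intro i j; fin_cases i <;> fin_cases j <;> simp_all
  have h := master2 (⟨![a, b], hinj1⟩ : Fin 2 ↪ Fin N) (⟨![c, d, e, f, g], hinj2⟩ : Fin 5 ↪ Fin N)
    hd (fun p => cond (p 0 1) 1 0) (fun p => cond ((p 0 1 && p 2 1) && p 3 4) 1 0)
  simp only [← Bool.decide_and, Bool.cond_decide, ite_one_mul_ite_one] at h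
  simp only [Function.Embedding.coeFn_mk, Matrix.cons_val_zero, Matrix.cons_val_one,
    Matrix.head_cons, Matrix.cons_val_two, Matrix.tail_cons, Matrix.cons_val_three,
    Matrix.cons_val_four, ← Bool.decide_and, Bool.cond_decide, ite_one_mul_ite_one] at h
  rw [show Nat.factorial 2 * Nat.factorial 5 = 240 from rfl,
    show ∑ τ : Equiv.Perm (Fin 2), (if τ 0 < τ 1 then 1 else 0) = 1 by decide,
    show ∑ τ : Equiv.Perm (Fin 5), (if (τ 0 < τ 1 ∧ τ 2 < τ 1) ∧ τ 3 < τ 4 then 1 else 0) = 20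
      by decide] at h
  rw [Finset.sum_congr rfl fun σ _ => if_congr
    (show ((σ a < σ b ∧ σ c < σ d) ∧ (σ e < σ d ∧ σ f < σ g))
        ↔ (σ a < σ b ∧ ((σ c < σ d ∧ σ e < σ d) ∧ σ f < σ g)) by tauto) rfl rfl]
  omega

lemma c4_4 {N : ℕ} (a b c d e f g k : Fin N)
    (h1 : a ≠ b) (h2 : a ≠ c) (h3 : a ≠ d) (h4 : b ≠ c) (h5 : b ≠ d) (h6 : c ≠ d)
    (h7 : e ≠ f) (h8 : e ≠ g) (h9 : e ≠ k) (h10 : f ≠ g) (h11 : f ≠ k) (h12 : g ≠ k)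
    (x1 : a ≠ e) (x2 : a ≠ f) (x3 : a ≠ g) (x4 : a ≠ k)
    (x5 : b ≠ e) (x6 : b ≠ f) (x7 : b ≠ g) (x8 : b ≠ k)
    (x9 : c ≠ e) (x10 : c ≠ f) (x11 : c ≠ g) (x12 : c ≠ k)
    (x13 : d ≠ e) (x14 : d ≠ f) (x15 : d ≠ g) (x16 : d ≠ k) :
    576 * ∑ σ : Equiv.Perm (Fin N),
        (if (σ a < σ b ∧ σ c < σ d) ∧ (σ e < σ f ∧ σ g < σ k) then 1 else 0)
      = 36 * N.factorial := by
  have hinj1 : Function.Injective ![a, b, c, d] := by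
    intro i j hij; fin_cases i <;> fin_cases j <;> simp_all
  have hinj2 : Function.Injective ![e, f, g, k] := by
    intro i j hij; fin_cases i <;> fin_cases j <;> simp_all
  have hd : ∀ (i : Fin 4) (j : Fin 4), (![a, b, c, d] : Fin 4 → Fin N) i ≠ ![e, f, g, k] j := by
    intro i j; fin_cases i <;> fin_cases j <;> simp_all
  have h := master2 (⟨![a, b, c, d], hinj1⟩ : Fin 4 ↪ Fin N)
    (⟨![e, f, g, k], hinj2⟩ : Fin 4 ↪ Fin N)
    hd (fun p => cond (p 0 1 && p 2 3) 1 0) (fun p => cond (p 0 1 && p 2 3) 1 0)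
  simp only [← Bool.decide_and, Bool.cond_decide, ite_one_mul_ite_one] at h
  simp only [Function.Embedding.coeFn_mk, Matrix.cons_val_zero, Matrix.cons_val_one,
    Matrix.head_cons, Matrix.cons_val_two, Matrix.tail_cons, Matrix.cons_val_three,
    ← Bool.decide_and, Bool.cond_decide, ite_one_mul_ite_one] at h
  rw [show Nat.factorial 4 * Nat.factorial 4 = 576 from rfl,
    show ∑ τ : Equiv.Perm (Fin 4), (if τ 0 < τ 1 ∧ τ 2 < τ 3 then 1 else 0) = 6 by decide] at h
  omega
lemma permVal_lt_iff {m : ℕ} (σ : Equiv.Perm (Fin m)) {i j : ℕ} (hi : i - 1 < m)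
    (hj : j - 1 < m) :
    (permVal σ i < permVal σ j) ↔ σ ⟨i - 1, hi⟩ < σ ⟨j - 1, hj⟩ := by
  rw [permVal, permVal, dif_pos hi, dif_pos hj, Fin.lt_def]
  omega

abbrev Ac (n : ℕ) (σ : Equiv.Perm (Fin (n - 1))) : Prop := permVal σ 2 < permVal σ 3
abbrev Cc (n : ℕ) (σ : Equiv.Perm (Fin (n - 1))) : Prop :=
  permVal σ (n - 2) < permVal σ (n - 3)
abbrev Bc (n i : ℕ) (σ : Equiv.Perm (Fin (n - 1))) : Prop :=
  permVal σ i < permVal σ (i - 1) ∧ permVal σ (i + 1) < permVal σ (i + 2)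

lemma Ac_iff {n : ℕ} (hn : 7 ≤ n) (σ : Equiv.Perm (Fin (n - 1))) :
    Ac n σ ↔ σ ⟨1, by omega⟩ < σ ⟨2, by omega⟩ :=
  permVal_lt_iff σ (by omega) (by omega)

lemma Cc_iff {n : ℕ} (hn : 7 ≤ n) (σ : Equiv.Perm (Fin (n - 1))) :
    Cc n σ ↔ σ ⟨n - 3, by omega⟩ < σ ⟨n - 4, by omega⟩ :=
  permVal_lt_iff σ (by omega) (by omega)

lemma Bc_iff {n i : ℕ} (hn : 7 ≤ n) (h2 : 2 ≤ i) (h3 : i ≤ n - 3)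
    (σ : Equiv.Perm (Fin (n - 1))) :
    Bc n i σ ↔ (σ ⟨i - 1, by omega⟩ < σ ⟨i - 2, by omega⟩ ∧
      σ ⟨i, by omega⟩ < σ ⟨i + 1, by omega⟩) :=
  and_congr (permVal_lt_iff σ (by omega) (by omega)) (permVal_lt_iff σ (by omega) (by omega))

lemma cast_sum_ite {α : Type*} [Fintype α] (P : α → Prop) [DecidablePred P] :
    ∑ x : α, (if P x then (1:ℚ) else 0) = ((∑ x : α, (if P x then 1 else 0) : ℕ) : ℚ) := by
  rw [Nat.cast_sum]
  exact Finset.sum_congr rfl fun x _ => by split_ifs <;> simp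

lemma nat_count_to_rat {X M K F : ℕ} (hM : 0 < M) (h : M * X = K * F) :
    (X : ℚ) = (K : ℚ) * F / M := by
  have h' := congrArg (Nat.cast : ℕ → ℚ) h
  push_cast at h'
  have hM' : (M : ℚ) ≠ 0 := by positivity
  field_simp
  linarith
lemma Bc_iff' {n i : ℕ} (hn : 7 ≤ n) (h2 : 2 ≤ i) (h3 : i ≤ n - 3)
    {p q r s : ℕ} (hp : p = i - 1) (hq : q = i - 2) (hr : r = i) (hs : s = i + 1)
    (hp' : p < n - 1) (hq' : q < n - 1) (hr' : r < n - 1) (hs' : s < n - 1)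
    (σ : Equiv.Perm (Fin (n - 1))) :
    Bc n i σ ↔ (σ ⟨p, hp'⟩ < σ ⟨q, hq'⟩ ∧ σ ⟨r, hr'⟩ < σ ⟨s, hs'⟩) := by
  subst hp hq hr hs
  exact Bc_iff hn h2 h3 σ

def vA : ℕ → ℚ := fun i => if i = 3 then 0 else if i = 4 then 1/6 else 1/8
def vC (n : ℕ) : ℕ → ℚ := fun i => if i = n - 4 then 0 else if i = n - 5 then 1/6 else 1/8
def w : ℕ → ℕ → ℚ := fun i j =>
  if i = j then 1/4
  else if i + 1 = j ∨ j + 1 = i then 1/20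
  else if i + 2 = j ∨ j + 2 = i then 0
  else if i + 3 = j ∨ j + 3 = i then 1/12
  else 1/16


lemma wsplit (i j : ℕ) : w i j
    = 1/16 + ((if i = j then (3/16 : ℚ) else 0)
      + ((if i + 1 = j then (-(1/80) : ℚ) else 0)
      + ((if j + 1 = i then (-(1/80) : ℚ) else 0)
      + ((if i + 2 = j then (-(1/16) : ℚ) else 0)
      + ((if j + 2 = i then (-(1/16) : ℚ) else 0)
      + ((if i + 3 = j then (1/48 : ℚ) else 0)
      + (if j + 3 = i then (1/48 : ℚ) else 0))))))) := by
  simp only [w]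
  split_ifs <;> first | (exfalso; omega) | norm_num

lemma w_self (j : ℕ) : w j j = 1/4 := by
  rw [wsplit, if_pos rfl, if_neg (by omega), if_neg (by omega), if_neg (by omega)]
  norm_num

lemma w_succ (i : ℕ) : w i (i + 1) = 1/20 := by
  rw [wsplit, if_neg (by omega), if_pos rfl, if_neg (by omega), if_neg (by omega),
    if_neg (by omega), if_neg (by omega), if_neg (by omega)]
  norm_num

lemma w_two (i : ℕ) : w i (i + 2) = 0 := by
  rw [wsplit, if_neg (by omega), if_neg (by omega), if_neg (by omega), if_pos rfl,
    if_neg (by omega), if_neg (by omega), if_neg (by omega)]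
  norm_num

lemma w_three (i : ℕ) : w i (i + 3) = 1/12 := by
  rw [wsplit, if_neg (by omega), if_neg (by omega), if_neg (by omega), if_neg (by omega),
    if_neg (by omega), if_pos rfl, if_neg (by omega)]
  norm_num

lemma w_far {i j : ℕ} (h : i + 4 ≤ j) : w i j = 1/16 := by
  rw [wsplit, if_neg (by omega), if_neg (by omega), if_neg (by omega), if_neg (by omega),
    if_neg (by omega), if_neg (by omega), if_neg (by omega)]
  norm_num

lemma count_to_val {n : ℕ} {P : Equiv.Perm (Fin (n - 1)) → Prop} [DecidablePred P]
    {M K : ℕ} (hM : 0 < M)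
    (h : M * ∑ σ : Equiv.Perm (Fin (n - 1)), (if P σ then 1 else 0) = K * (n - 1).factorial)
    (v : ℚ) (hv : (K : ℚ) / M = v) :
    ∑ σ : Equiv.Perm (Fin (n - 1)), (if P σ then (1 : ℚ) else 0)
      = ((n - 1).factorial : ℚ) * v := by
  rw [cast_sum_ite, nat_count_to_rat hM h, ← hv]
  ring

lemma S_A {n : ℕ} (hn : 7 ≤ n) :
    ∑ σ : Equiv.Perm (Fin (n - 1)), (if Ac n σ then (1 : ℚ) else 0)
      = ((n - 1).factorial : ℚ) * (1 / 2) := by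
  rw [Finset.sum_congr rfl fun σ _ => if_congr (Ac_iff hn σ) rfl rfl]
  exact count_to_val (by norm_num)
    (c2 ⟨1, by omega⟩ ⟨2, by omega⟩ (by simp only [ne_eq, Fin.mk.injEq]; omega)) _ (by norm_num)

lemma S_C {n : ℕ} (hn : 7 ≤ n) :
    ∑ σ : Equiv.Perm (Fin (n - 1)), (if Cc n σ then (1 : ℚ) else 0)
      = ((n - 1).factorial : ℚ) * (1 / 2) := by
  rw [Finset.sum_congr rfl fun σ _ => if_congr (Cc_iff hn σ) rfl rfl]
  exact count_to_val (by norm_num)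
    (c2 ⟨n - 3, by omega⟩ ⟨n - 4, by omega⟩ (by simp only [ne_eq, Fin.mk.injEq]; omega)) _
    (by norm_num)

lemma S_B {n i : ℕ} (hn : 7 ≤ n) (h2 : 2 ≤ i) (h3 : i ≤ n - 3) :
    ∑ σ : Equiv.Perm (Fin (n - 1)), (if Bc n i σ then (1 : ℚ) else 0)
      = ((n - 1).factorial : ℚ) * (1 / 4) := by
  rw [Finset.sum_congr rfl fun σ _ => if_congr (Bc_iff hn h2 h3 σ) rfl rfl]
  exact count_to_val (by norm_num)
    (c4 ⟨i - 1, by omega⟩ ⟨i - 2, by omega⟩ ⟨i, by omega⟩ ⟨i + 1, by omega⟩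
      (by simp only [ne_eq, Fin.mk.injEq]; omega) (by simp only [ne_eq, Fin.mk.injEq]; omega)
      (by simp only [ne_eq, Fin.mk.injEq]; omega) (by simp only [ne_eq, Fin.mk.injEq]; omega)
      (by simp only [ne_eq, Fin.mk.injEq]; omega) (by simp only [ne_eq, Fin.mk.injEq]; omega))
    _ (by norm_num)

lemma S_AC {n : ℕ} (hn : 7 ≤ n) :
    ∑ σ : Equiv.Perm (Fin (n - 1)), (if Ac n σ ∧ Cc n σ then (1 : ℚ) else 0)
      = ((n - 1).factorial : ℚ) * (1 / 4) := by
  rw [Finset.sum_congr rfl fun σ _ =>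
    if_congr (and_congr (Ac_iff hn σ) (Cc_iff hn σ)) rfl rfl]
  exact count_to_val (by norm_num)
    (c4 ⟨1, by omega⟩ ⟨2, by omega⟩ ⟨n - 3, by omega⟩ ⟨n - 4, by omega⟩
      (by simp only [ne_eq, Fin.mk.injEq]; omega) (by simp only [ne_eq, Fin.mk.injEq]; omega)
      (by simp only [ne_eq, Fin.mk.injEq]; omega) (by simp only [ne_eq, Fin.mk.injEq]; omega)
      (by simp only [ne_eq, Fin.mk.injEq]; omega) (by simp only [ne_eq, Fin.mk.injEq]; omega))
    _ (by norm_num)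

lemma S_AB {n i : ℕ} (hn : 7 ≤ n) (h2 : 2 ≤ i) (h3 : i ≤ n - 3) :
    ∑ σ : Equiv.Perm (Fin (n - 1)), (if Ac n σ ∧ Bc n i σ then (1 : ℚ) else 0)
      = ((n - 1).factorial : ℚ) * vA i := by
  by_cases e2 : i = 2
  · subst e2
    rw [Finset.sum_congr rfl fun σ _ => if_congr
      (and_congr (Ac_iff hn σ) (Bc_iff' hn h2 h3 rfl rfl rfl rfl
        (show 1 < n - 1 by omega) (show 0 < n - 1 by omega)
        (show 2 < n - 1 by omega) (show 3 < n - 1 by omega) σ)) rfl rfl]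
    exact count_to_val (by norm_num)
      (c4b ⟨1, by omega⟩ ⟨2, by omega⟩ ⟨0, by omega⟩ ⟨3, by omega⟩
        (by simp only [ne_eq, Fin.mk.injEq]; omega) (by simp only [ne_eq, Fin.mk.injEq]; omega)
        (by simp only [ne_eq, Fin.mk.injEq]; omega) (by simp only [ne_eq, Fin.mk.injEq]; omega)
        (by simp only [ne_eq, Fin.mk.injEq]; omega) (by simp only [ne_eq, Fin.mk.injEq]; omega))
      _ (by norm_num [vA])
  by_cases e3 : i = 3
  · subst e3
    rw [show vA 3 = 0 by norm_num [vA], mul_zero]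
    refine Finset.sum_eq_zero fun σ _ => if_neg ?_
    rintro ⟨h1, hB⟩
    rw [Ac_iff hn σ] at h1
    rw [Bc_iff' hn h2 h3 rfl rfl rfl rfl
      (show 2 < n - 1 by omega) (show 1 < n - 1 by omega)
      (show 3 < n - 1 by omega) (show 4 < n - 1 by omega) σ] at hB
    exact absurd hB.1 (lt_asymm h1)
  by_cases e4 : i = 4
  · subst e4
    rw [Finset.sum_congr rfl fun σ _ => if_congr
      (and_congr (Ac_iff hn σ) (Bc_iff' hn h2 h3 rfl rfl rfl rfl
        (show 3 < n - 1 by omega) (show 2 < n - 1 by omega)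
        (show 4 < n - 1 by omega) (show 5 < n - 1 by omega) σ)) rfl rfl]
    exact count_to_val (by norm_num)
      (c3_2A ⟨1, by omega⟩ ⟨2, by omega⟩ ⟨3, by omega⟩ ⟨4, by omega⟩ ⟨5, by omega⟩
        (by simp only [ne_eq, Fin.mk.injEq]; omega) (by simp only [ne_eq, Fin.mk.injEq]; omega)
        (by simp only [ne_eq, Fin.mk.injEq]; omega) (by simp only [ne_eq, Fin.mk.injEq]; omega)
        (by simp only [ne_eq, Fin.mk.injEq]; omega) (by simp only [ne_eq, Fin.mk.injEq]; omega)
        (by simp only [ne_eq, Fin.mk.injEq]; omega) (by simp only [ne_eq, Fin.mk.injEq]; omega)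
        (by simp only [ne_eq, Fin.mk.injEq]; omega) (by simp only [ne_eq, Fin.mk.injEq]; omega))
      _ (by norm_num [vA])
  · have h5 : 5 ≤ i := by omega
    rw [Finset.sum_congr rfl fun σ _ => if_congr
      (and_congr (Ac_iff hn σ) (Bc_iff hn h2 h3 σ)) rfl rfl]
    refine count_to_val (by norm_num)
      (c2_4 ⟨1, by omega⟩ ⟨2, by omega⟩ ⟨i - 1, by omega⟩ ⟨i - 2, by omega⟩
        ⟨i, by omega⟩ ⟨i + 1, by omega⟩
        (by simp only [ne_eq, Fin.mk.injEq]; omega) (by simp only [ne_eq, Fin.mk.injEq]; omega)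
        (by simp only [ne_eq, Fin.mk.injEq]; omega) (by simp only [ne_eq, Fin.mk.injEq]; omega)
        (by simp only [ne_eq, Fin.mk.injEq]; omega) (by simp only [ne_eq, Fin.mk.injEq]; omega)
        (by simp only [ne_eq, Fin.mk.injEq]; omega) (by simp only [ne_eq, Fin.mk.injEq]; omega)
        (by simp only [ne_eq, Fin.mk.injEq]; omega) (by simp only [ne_eq, Fin.mk.injEq]; omega)
        (by simp only [ne_eq, Fin.mk.injEq]; omega) (by simp only [ne_eq, Fin.mk.injEq]; omega)
        (by simp only [ne_eq, Fin.mk.injEq]; omega) (by simp only [ne_eq, Fin.mk.injEq]; omega)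
        (by simp only [ne_eq, Fin.mk.injEq]; omega)) _ ?_
    rw [show vA i = 1/8 by simp only [vA]; rw [if_neg (by omega), if_neg (by omega)]]
    norm_num

lemma S_CB {n i : ℕ} (hn : 7 ≤ n) (h2 : 2 ≤ i) (h3 : i ≤ n - 3) :
    ∑ σ : Equiv.Perm (Fin (n - 1)), (if Cc n σ ∧ Bc n i σ then (1 : ℚ) else 0)
      = ((n - 1).factorial : ℚ) * vC n i := by
  by_cases e2 : i = n - 3
  · subst e2
    rw [Finset.sum_congr rfl fun σ _ => if_congr
      (and_congr (Cc_iff hn σ) (Bc_iff' hn h2 h3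
        (show n - 4 = n - 3 - 1 by omega) (show n - 5 = n - 3 - 2 by omega) rfl
        (show n - 2 = n - 3 + 1 by omega)
        (show n - 4 < n - 1 by omega) (show n - 5 < n - 1 by omega)
        (show n - 3 < n - 1 by omega) (show n - 2 < n - 1 by omega) σ)) rfl rfl]
    exact count_to_val (by norm_num)
      (c4c ⟨n - 3, by omega⟩ ⟨n - 4, by omega⟩ ⟨n - 5, by omega⟩ ⟨n - 2, by omega⟩
        (by simp only [ne_eq, Fin.mk.injEq]; omega) (by simp only [ne_eq, Fin.mk.injEq]; omega)
        (by simp only [ne_eq, Fin.mk.injEq]; omega) (by simp only [ne_eq, Fin.mk.injEq]; omega)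
        (by simp only [ne_eq, Fin.mk.injEq]; omega) (by simp only [ne_eq, Fin.mk.injEq]; omega))
      _ (by rw [show vC n (n - 3) = 1/8 by
            simp only [vC]; rw [if_neg (by omega), if_neg (by omega)]]; norm_num)
  by_cases e3 : i = n - 4
  · subst e3
    rw [show vC n (n - 4) = 0 by simp [vC], mul_zero]
    refine Finset.sum_eq_zero fun σ _ => if_neg ?_
    rintro ⟨h1, hB⟩
    rw [Cc_iff hn σ] at h1
    rw [Bc_iff' hn h2 h3
      (show n - 5 = n - 4 - 1 by omega) (show n - 6 = n - 4 - 2 by omega) rfl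
      (show n - 3 = n - 4 + 1 by omega)
      (show n - 5 < n - 1 by omega) (show n - 6 < n - 1 by omega)
      (show n - 4 < n - 1 by omega) (show n - 3 < n - 1 by omega) σ] at hB
    exact absurd hB.2 (lt_asymm h1)
  by_cases e4 : i = n - 5
  · subst e4
    rw [Finset.sum_congr rfl fun σ _ => if_congr
      (and_congr (Cc_iff hn σ) (Bc_iff' hn h2 h3
        (show n - 6 = n - 5 - 1 by omega) (show n - 7 = n - 5 - 2 by omega) rfl
        (show n - 4 = n - 5 + 1 by omega)
        (show n - 6 < n - 1 by omega) (show n - 7 < n - 1 by omega)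
        (show n - 5 < n - 1 by omega) (show n - 4 < n - 1 by omega) σ)) rfl rfl]
    exact count_to_val (by norm_num)
      (c3_2C ⟨n - 3, by omega⟩ ⟨n - 4, by omega⟩ ⟨n - 6, by omega⟩ ⟨n - 7, by omega⟩
        ⟨n - 5, by omega⟩
        (by simp only [ne_eq, Fin.mk.injEq]; omega) (by simp only [ne_eq, Fin.mk.injEq]; omega)
        (by simp only [ne_eq, Fin.mk.injEq]; omega) (by simp only [ne_eq, Fin.mk.injEq]; omega)
        (by simp only [ne_eq, Fin.mk.injEq]; omega) (by simp only [ne_eq, Fin.mk.injEq]; omega)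
        (by simp only [ne_eq, Fin.mk.injEq]; omega) (by simp only [ne_eq, Fin.mk.injEq]; omega)
        (by simp only [ne_eq, Fin.mk.injEq]; omega) (by simp only [ne_eq, Fin.mk.injEq]; omega))
      _ (by rw [show vC n (n - 5) = 1/6 by
            simp only [vC]; rw [if_neg (by omega)]; simp]; norm_num)
  · have h6 : i ≤ n - 6 := by omega
    rw [Finset.sum_congr rfl fun σ _ => if_congr
      (and_congr (Cc_iff hn σ) (Bc_iff hn h2 h3 σ)) rfl rfl]
    refine count_to_val (by norm_num)
      (c2_4 ⟨n - 3, by omega⟩ ⟨n - 4, by omega⟩ ⟨i - 1, by omega⟩ ⟨i - 2, by omega⟩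
        ⟨i, by omega⟩ ⟨i + 1, by omega⟩
        (by simp only [ne_eq, Fin.mk.injEq]; omega) (by simp only [ne_eq, Fin.mk.injEq]; omega)
        (by simp only [ne_eq, Fin.mk.injEq]; omega) (by simp only [ne_eq, Fin.mk.injEq]; omega)
        (by simp only [ne_eq, Fin.mk.injEq]; omega) (by simp only [ne_eq, Fin.mk.injEq]; omega)
        (by simp only [ne_eq, Fin.mk.injEq]; omega) (by simp only [ne_eq, Fin.mk.injEq]; omega)
        (by simp only [ne_eq, Fin.mk.injEq]; omega) (by simp only [ne_eq, Fin.mk.injEq]; omega)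
        (by simp only [ne_eq, Fin.mk.injEq]; omega) (by simp only [ne_eq, Fin.mk.injEq]; omega)
        (by simp only [ne_eq, Fin.mk.injEq]; omega) (by simp only [ne_eq, Fin.mk.injEq]; omega)
        (by simp only [ne_eq, Fin.mk.injEq]; omega)) _ ?_
    rw [show vC n i = 1/8 by simp only [vC]; rw [if_neg (by omega), if_neg (by omega)]]
    norm_num

lemma S_BB_le {n i j : ℕ} (hn : 7 ≤ n) (h2 : 2 ≤ i) (h3 : i ≤ n - 3)
    (h4 : 2 ≤ j) (h5 : j ≤ n - 3) (hij : i ≤ j) :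
    ∑ σ : Equiv.Perm (Fin (n - 1)), (if Bc n i σ ∧ Bc n j σ then (1 : ℚ) else 0)
      = ((n - 1).factorial : ℚ) * w i j := by
  by_cases e0 : j = i
  · subst e0
    rw [Finset.sum_congr rfl fun σ _ => if_congr (and_self_iff) rfl rfl,
      S_B hn h2 h3, w_self j]
  by_cases e1 : j = i + 1
  · subst e1
    rw [Finset.sum_congr rfl fun σ _ => if_congr
      (and_congr (Bc_iff hn h2 h3 σ) (Bc_iff' hn h4 h5
        (show i = i + 1 - 1 by omega) (show i - 1 = i + 1 - 2 by omega) rfl rfl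
        (show i < n - 1 by omega) (show i - 1 < n - 1 by omega)
        (show i + 1 < n - 1 by omega) (show i + 2 < n - 1 by omega) σ)) rfl rfl]
    refine count_to_val (by norm_num)
      (c5 ⟨i - 1, by omega⟩ ⟨i - 2, by omega⟩ ⟨i, by omega⟩ ⟨i + 1, by omega⟩ ⟨i + 2, by omega⟩
        (by simp only [ne_eq, Fin.mk.injEq]; omega) (by simp only [ne_eq, Fin.mk.injEq]; omega)
        (by simp only [ne_eq, Fin.mk.injEq]; omega) (by simp only [ne_eq, Fin.mk.injEq]; omega)
        (by simp only [ne_eq, Fin.mk.injEq]; omega) (by simp only [ne_eq, Fin.mk.injEq]; omega)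
        (by simp only [ne_eq, Fin.mk.injEq]; omega) (by simp only [ne_eq, Fin.mk.injEq]; omega)
        (by simp only [ne_eq, Fin.mk.injEq]; omega) (by simp only [ne_eq, Fin.mk.injEq]; omega))
      _ ?_
    rw [w_succ i]
    norm_num
  by_cases e2 : j = i + 2
  · subst e2
    rw [w_two i, mul_zero]
    refine Finset.sum_eq_zero fun σ _ => if_neg ?_
    rintro ⟨hBi, hBj⟩
    rw [Bc_iff hn h2 h3 σ] at hBi
    rw [Bc_iff' hn h4 h5
      (show i + 1 = i + 2 - 1 by omega) (show i = i + 2 - 2 by omega) rfl rfl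
      (show i + 1 < n - 1 by omega) (show i < n - 1 by omega)
      (show i + 2 < n - 1 by omega) (show i + 3 < n - 1 by omega) σ] at hBj
    exact absurd hBj.1 (lt_asymm hBi.2)
  by_cases e3 : j = i + 3
  · subst e3
    rw [Finset.sum_congr rfl fun σ _ => if_congr
      (and_congr (Bc_iff hn h2 h3 σ) (Bc_iff' hn h4 h5
        (show i + 2 = i + 3 - 1 by omega) (show i + 1 = i + 3 - 2 by omega) rfl rfl
        (show i + 2 < n - 1 by omega) (show i + 1 < n - 1 by omega)
        (show i + 3 < n - 1 by omega) (show i + 4 < n - 1 by omega) σ)) rfl rfl]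
    refine count_to_val (by norm_num)
      (c2_5 ⟨i - 1, by omega⟩ ⟨i - 2, by omega⟩ ⟨i, by omega⟩ ⟨i + 1, by omega⟩
        ⟨i + 2, by omega⟩ ⟨i + 3, by omega⟩ ⟨i + 4, by omega⟩
        (by simp only [ne_eq, Fin.mk.injEq]; omega) (by simp only [ne_eq, Fin.mk.injEq]; omega)
        (by simp only [ne_eq, Fin.mk.injEq]; omega) (by simp only [ne_eq, Fin.mk.injEq]; omega)
        (by simp only [ne_eq, Fin.mk.injEq]; omega) (by simp only [ne_eq, Fin.mk.injEq]; omega)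
        (by simp only [ne_eq, Fin.mk.injEq]; omega) (by simp only [ne_eq, Fin.mk.injEq]; omega)
        (by simp only [ne_eq, Fin.mk.injEq]; omega) (by simp only [ne_eq, Fin.mk.injEq]; omega)
        (by simp only [ne_eq, Fin.mk.injEq]; omega) (by simp only [ne_eq, Fin.mk.injEq]; omega)
        (by simp only [ne_eq, Fin.mk.injEq]; omega) (by simp only [ne_eq, Fin.mk.injEq]; omega)
        (by simp only [ne_eq, Fin.mk.injEq]; omega) (by simp only [ne_eq, Fin.mk.injEq]; omega)
        (by simp only [ne_eq, Fin.mk.injEq]; omega) (by simp only [ne_eq, Fin.mk.injEq]; omega)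
        (by simp only [ne_eq, Fin.mk.injEq]; omega) (by simp only [ne_eq, Fin.mk.injEq]; omega)
        (by simp only [ne_eq, Fin.mk.injEq]; omega)) _ ?_
    rw [w_three i]
    norm_num
  · have hfar : i + 4 ≤ j := by omega
    rw [Finset.sum_congr rfl fun σ _ => if_congr
      (and_congr (Bc_iff hn h2 h3 σ) (Bc_iff hn h4 h5 σ)) rfl rfl]
    refine count_to_val (by norm_num)
      (c4_4 ⟨i - 1, by omega⟩ ⟨i - 2, by omega⟩ ⟨i, by omega⟩ ⟨i + 1, by omega⟩
        ⟨j - 1, by omega⟩ ⟨j - 2, by omega⟩ ⟨j, by omega⟩ ⟨j + 1, by omega⟩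
        (by simp only [ne_eq, Fin.mk.injEq]; omega) (by simp only [ne_eq, Fin.mk.injEq]; omega)
        (by simp only [ne_eq, Fin.mk.injEq]; omega) (by simp only [ne_eq, Fin.mk.injEq]; omega)
        (by simp only [ne_eq, Fin.mk.injEq]; omega) (by simp only [ne_eq, Fin.mk.injEq]; omega)
        (by simp only [ne_eq, Fin.mk.injEq]; omega) (by simp only [ne_eq, Fin.mk.injEq]; omega)
        (by simp only [ne_eq, Fin.mk.injEq]; omega) (by simp only [ne_eq, Fin.mk.injEq]; omega)
        (by simp only [ne_eq, Fin.mk.injEq]; omega) (by simp only [ne_eq, Fin.mk.injEq]; omega)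
        (by simp only [ne_eq, Fin.mk.injEq]; omega) (by simp only [ne_eq, Fin.mk.injEq]; omega)
        (by simp only [ne_eq, Fin.mk.injEq]; omega) (by simp only [ne_eq, Fin.mk.injEq]; omega)
        (by simp only [ne_eq, Fin.mk.injEq]; omega) (by simp only [ne_eq, Fin.mk.injEq]; omega)
        (by simp only [ne_eq, Fin.mk.injEq]; omega) (by simp only [ne_eq, Fin.mk.injEq]; omega)
        (by simp only [ne_eq, Fin.mk.injEq]; omega) (by simp only [ne_eq, Fin.mk.injEq]; omega)
        (by simp only [ne_eq, Fin.mk.injEq]; omega) (by simp only [ne_eq, Fin.mk.injEq]; omega)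
        (by simp only [ne_eq, Fin.mk.injEq]; omega) (by simp only [ne_eq, Fin.mk.injEq]; omega)
        (by simp only [ne_eq, Fin.mk.injEq]; omega) (by simp only [ne_eq, Fin.mk.injEq]; omega))
      _ ?_
    rw [w_far hfar]
    norm_num

lemma w_symm (i j : ℕ) : w i j = w j i := by
  simp only [w]
  split_ifs <;> first | rfl | (exfalso; omega)

lemma S_BB {n i j : ℕ} (hn : 7 ≤ n) (h2 : 2 ≤ i) (h3 : i ≤ n - 3)
    (h4 : 2 ≤ j) (h5 : j ≤ n - 3) :
    ∑ σ : Equiv.Perm (Fin (n - 1)), (if Bc n i σ ∧ Bc n j σ then (1 : ℚ) else 0)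
      = ((n - 1).factorial : ℚ) * w i j := by
  rcases le_total i j with h | h
  · exact S_BB_le hn h2 h3 h4 h5 h
  · rw [Finset.sum_congr rfl fun σ _ => if_congr and_comm rfl rfl,
      S_BB_le hn h4 h5 h2 h3 h, w_symm]
lemma sum_vA {n : ℕ} (hn : 7 ≤ n) :
    ∑ i ∈ Finset.Icc 2 (n - 3), vA i = ((n - 4 : ℕ) : ℚ) / 8 - 1 / 12 := by
  have key : ∀ i ∈ Finset.Icc 2 (n - 3), vA i
      = 1/8 + ((if i = 3 then (-(1/8) : ℚ) else 0) + (if i = 4 then (1/24 : ℚ) else 0)) := by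
    intro i _
    simp only [vA]
    split_ifs <;> first | (exfalso; omega) | norm_num
  rw [Finset.sum_congr rfl key, Finset.sum_add_distrib, Finset.sum_add_distrib,
    Finset.sum_const, Finset.sum_ite_eq' (Finset.Icc 2 (n - 3)) 3 (fun _ => (-(1/8) : ℚ)),
    Finset.sum_ite_eq' (Finset.Icc 2 (n - 3)) 4 (fun _ => (1/24 : ℚ)),
    if_pos (by simp only [Finset.mem_Icc]; omega), if_pos (by simp only [Finset.mem_Icc]; omega),
    Nat.card_Icc, nsmul_eq_mul, show n - 3 + 1 - 2 = n - 4 by omega]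
  ring

lemma sum_vC {n : ℕ} (hn : 7 ≤ n) :
    ∑ i ∈ Finset.Icc 2 (n - 3), vC n i = ((n - 4 : ℕ) : ℚ) / 8 - 1 / 12 := by
  have key : ∀ i ∈ Finset.Icc 2 (n - 3), vC n i
      = 1/8 + ((if i = n - 4 then (-(1/8) : ℚ) else 0)
          + (if i = n - 5 then (1/24 : ℚ) else 0)) := by
    intro i _
    simp only [vC]
    split_ifs <;> first | (exfalso; omega) | norm_num
  rw [Finset.sum_congr rfl key, Finset.sum_add_distrib, Finset.sum_add_distrib,
    Finset.sum_const,
    Finset.sum_ite_eq' (Finset.Icc 2 (n - 3)) (n - 4) (fun _ => (-(1/8) : ℚ)),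
    Finset.sum_ite_eq' (Finset.Icc 2 (n - 3)) (n - 5) (fun _ => (1/24 : ℚ)),
    if_pos (by simp only [Finset.mem_Icc]; omega), if_pos (by simp only [Finset.mem_Icc]; omega),
    Nat.card_Icc, nsmul_eq_mul, show n - 3 + 1 - 2 = n - 4 by omega]
  ring

lemma sum_shift {n : ℕ} (hn : 7 ≤ n) (d : ℕ) (hd : 1 ≤ d) (c : ℚ) :
    ∑ i ∈ Finset.Icc 2 (n - 3), ∑ j ∈ Finset.Icc 2 (n - 3), (if i + d = j then c else 0)
      = ((n - 4 - d : ℕ) : ℚ) * c := by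
  have step1 : ∀ i ∈ Finset.Icc 2 (n - 3),
      ∑ j ∈ Finset.Icc 2 (n - 3), (if i + d = j then c else 0)
      = if i ∈ Finset.Icc 2 (n - 3 - d) then c else 0 := by
    intro i hi
    rw [Finset.sum_ite_eq (Finset.Icc 2 (n - 3)) (i + d) (fun _ => c)]
    refine if_congr ?_ rfl rfl
    simp only [Finset.mem_Icc] at hi ⊢
    omega
  rw [Finset.sum_congr rfl step1, Finset.sum_ite_mem,
    show Finset.Icc 2 (n - 3) ∩ Finset.Icc 2 (n - 3 - d) = Finset.Icc 2 (n - 3 - d) by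
      ext x; simp only [Finset.mem_inter, Finset.mem_Icc]; omega,
    Finset.sum_const, Nat.card_Icc, nsmul_eq_mul,
    show n - 3 - d + 1 - 2 = n - 4 - d by omega]

lemma sum_shift' {n : ℕ} (hn : 7 ≤ n) (d : ℕ) (hd : 1 ≤ d) (c : ℚ) :
    ∑ i ∈ Finset.Icc 2 (n - 3), ∑ j ∈ Finset.Icc 2 (n - 3), (if j + d = i then c else 0)
      = ((n - 4 - d : ℕ) : ℚ) * c := by
  rw [Finset.sum_comm]
  exact sum_shift hn d hd c

lemma sum_w {n : ℕ} (hn : 7 ≤ n) :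
    ∑ i ∈ Finset.Icc 2 (n - 3), ∑ j ∈ Finset.Icc 2 (n - 3), w i j
      = ((n - 4 : ℕ) : ℚ) * ((n - 4 : ℕ) : ℚ) / 16 + ((n - 4 : ℕ) : ℚ) * (3/16)
        + 2 * (((n - 5 : ℕ) : ℚ) * (-(1/80)))
        + 2 * (((n - 6 : ℕ) : ℚ) * (-(1/16)))
        + 2 * (((n - 7 : ℕ) : ℚ) * (1/48)) := by
  rw [Finset.sum_congr rfl fun i _ => Finset.sum_congr rfl fun j _ => wsplit i j]
  simp only [Finset.sum_add_distrib]
  rw [Finset.sum_congr rfl fun i (hi : i ∈ Finset.Icc 2 (n - 3)) =>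
      (Finset.sum_ite_eq (Finset.Icc 2 (n - 3)) i (fun _ => (3/16 : ℚ))).trans (if_pos hi)]
  rw [sum_shift hn 1 (by omega), sum_shift' hn 1 (by omega),
    sum_shift hn 2 (by omega), sum_shift' hn 2 (by omega),
    sum_shift hn 3 (by omega), sum_shift' hn 3 (by omega)]
  rw [Finset.sum_const, Finset.sum_const, Finset.sum_const, Nat.card_Icc,
    show n - 3 + 1 - 2 = n - 4 by omega, nsmul_eq_mul, nsmul_eq_mul, nsmul_eq_mul,
    show n - 4 - 1 = n - 5 by omega, show n - 4 - 2 = n - 6 by omega,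
    show n - 4 - 3 = n - 7 by omega]
  ring
lemma ite_one_mul_ite_one_q (P Q : Prop) [Decidable P] [Decidable Q] :
    (if P then (1:ℚ) else 0) * (if Q then 1 else 0) = if P ∧ Q then 1 else 0 := by
  by_cases hP : P <;> by_cases hQ : Q <;> simp_all

lemma sharedCount_cast (n : ℕ) (σ : Equiv.Perm (Fin (n - 1))) :
    (sharedCount n σ : ℚ)
      = (if Ac n σ then (1:ℚ) else 0)
        + (∑ i ∈ Finset.Icc 2 (n - 3), if Bc n i σ then (1:ℚ) else 0)
        + (if Cc n σ then (1:ℚ) else 0) := by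
  rw [sharedCount]
  push_cast [apply_ite (Nat.cast : ℕ → ℚ)]
  rfl

lemma L1 (n : ℕ) (hn : 7 ≤ n) :
    ∑ σ : Equiv.Perm (Fin (n - 1)), (sharedCount n σ : ℚ)
      = ((n - 1).factorial : ℚ) * n / 4 := by
  rw [Finset.sum_congr rfl fun σ _ => sharedCount_cast n σ,
    Finset.sum_add_distrib, Finset.sum_add_distrib, S_A hn, S_C hn, Finset.sum_comm,
    Finset.sum_congr rfl fun i hi =>
      S_B hn (Finset.mem_Icc.mp hi).1 (Finset.mem_Icc.mp hi).2,
    Finset.sum_const, Nat.card_Icc, nsmul_eq_mul, show n - 3 + 1 - 2 = n - 4 by omega]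
  rw [Nat.cast_sub (by omega : 4 ≤ n)]
  push_cast
  ring

lemma L2 (n : ℕ) (hn : 7 ≤ n) :
    ∑ σ : Equiv.Perm (Fin (n - 1)), (sharedCount n σ : ℚ) ^ 2
      = ((n - 1).factorial : ℚ) * ((n : ℚ) ^ 2 / 16 + 19 * (n : ℚ) / 240) := by
  have expand : ∀ x y z : ℚ, (x + y + z) ^ 2
      = x * x + (z * z + (2 * (x * z) + (2 * (x * y) + (2 * (z * y) + y * y)))) := by
    intros; ring
  rw [Finset.sum_congr rfl fun σ _ => by rw [sharedCount_cast n σ, expand]]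
  simp only [Finset.sum_add_distrib]
  -- T1 : ∑ A·A
  rw [Finset.sum_congr rfl fun σ _ => show
      (if Ac n σ then (1:ℚ) else 0) * (if Ac n σ then (1:ℚ) else 0)
        = (if Ac n σ then (1:ℚ) else 0) by split_ifs <;> ring, S_A hn]
  -- T2 : ∑ C·C
  rw [Finset.sum_congr rfl fun σ _ => show
      (if Cc n σ then (1:ℚ) else 0) * (if Cc n σ then (1:ℚ) else 0)
        = (if Cc n σ then (1:ℚ) else 0) by split_ifs <;> ring, S_C hn]
  -- T3 : ∑ 2·(A·C)
  rw [Finset.sum_congr rfl fun σ _ => by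
      rw [ite_one_mul_ite_one_q (Ac n σ) (Cc n σ)],
    ← Finset.mul_sum, S_AC hn]
  -- T4 : ∑ 2·(A·S)
  rw [Finset.sum_congr rfl fun σ _ => by
      rw [Finset.mul_sum (Finset.Icc 2 (n - 3))
        (fun i => if Bc n i σ then (1:ℚ) else 0) (if Ac n σ then (1:ℚ) else 0),
        Finset.sum_congr rfl fun i _ => ite_one_mul_ite_one_q (Ac n σ) (Bc n i σ)],
    ← Finset.mul_sum, Finset.sum_comm,
    Finset.sum_congr rfl fun i hi =>
      S_AB hn (Finset.mem_Icc.mp hi).1 (Finset.mem_Icc.mp hi).2,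
    ← Finset.mul_sum, sum_vA hn]
  -- T5 : ∑ 2·(C·S)
  rw [Finset.sum_congr rfl fun σ _ => by
      rw [Finset.mul_sum (Finset.Icc 2 (n - 3))
        (fun i => if Bc n i σ then (1:ℚ) else 0) (if Cc n σ then (1:ℚ) else 0),
        Finset.sum_congr rfl fun i _ => ite_one_mul_ite_one_q (Cc n σ) (Bc n i σ)],
    ← Finset.mul_sum, Finset.sum_comm,
    Finset.sum_congr rfl fun i hi =>
      S_CB hn (Finset.mem_Icc.mp hi).1 (Finset.mem_Icc.mp hi).2,
    ← Finset.mul_sum, sum_vC hn]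
  -- T6 : ∑ S·S
  rw [Finset.sum_congr rfl fun σ _ => by
      rw [Finset.sum_mul_sum (Finset.Icc 2 (n - 3)) (Finset.Icc 2 (n - 3))
        (fun i => if Bc n i σ then (1:ℚ) else 0) (fun j => if Bc n j σ then (1:ℚ) else 0),
        Finset.sum_congr rfl fun i _ => Finset.sum_congr rfl fun j _ =>
          ite_one_mul_ite_one_q (Bc n i σ) (Bc n j σ)],
    Finset.sum_comm,
    Finset.sum_congr rfl fun i hi => Finset.sum_comm,
    Finset.sum_congr rfl fun i hi => Finset.sum_congr rfl fun j hj =>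
      S_BB hn (Finset.mem_Icc.mp hi).1 (Finset.mem_Icc.mp hi).2
        (Finset.mem_Icc.mp hj).1 (Finset.mem_Icc.mp hj).2,
    Finset.sum_congr rfl fun i (hi : i ∈ Finset.Icc 2 (n - 3)) =>
      (Finset.mul_sum (Finset.Icc 2 (n - 3)) (fun j => w i j)
        ((n - 1).factorial : ℚ)).symm,
    ← Finset.mul_sum, sum_w hn]
  -- final arithmetic
  rw [Nat.cast_sub (by omega : 4 ≤ n), Nat.cast_sub (by omega : 5 ≤ n),
    Nat.cast_sub (by omega : 6 ≤ n), Nat.cast_sub (by omega : 7 ≤ n)]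
  push_cast
  ring
end SNN

/-- For a uniformly random permutation `σ` with `n ≥ 7`, the variance
`E[Q²] − (E[Q])²` of the number of shared-NN indicators `Q` equals `19n/240`. -/
theorem variance_sharedCount_eq (n : ℕ) (hn : 7 ≤ n) :
    (∑ σ : Equiv.Perm (Fin (n - 1)), (sharedCount n σ : ℚ) ^ 2) / (Nat.factorial (n - 1)) -
        ((∑ σ : Equiv.Perm (Fin (n - 1)), (sharedCount n σ : ℚ)) / (Nat.factorial (n - 1))) ^ 2 =
      19 * (n : ℚ) / 240 := by
  have hF : ((Nat.factorial (n - 1) : ℚ)) ≠ 0 :=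
    Nat.cast_ne_zero.mpr (Nat.factorial_ne_zero _)
  rw [SNN.L1 n hn, SNN.L2 n hn]
  field_simp
  ring
end

section
/- For a uniformly random permutation σ of {1,…,m} with m ≥ 5 and any 2 ≤ i ≤ m-3, the probability of the event {σ(i)<σ(i-1), σ(i+1)<σ(i+2), σ(i+1)<σ(i), σ(i+2)<σ(i+3)} equals 1/20; consequently Cov of the indicators of B_i = {σ(i)<σ(i-1), σ(i+1)<σ(i+2)} and B_{i+1} = {σ(i+1)<σ(i), σ(i+2)<σ(i+3)} equals −1/80. -/
/-- `B_i`: the event `{σ(i)<σ(i-1), σ(i+1)<σ(i+2)}`. -/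
abbrev sharedEvent {m : ℕ} (σ : Equiv.Perm (Fin m)) (i : ℕ) : Prop :=
  permVal σ i < permVal σ (i - 1) ∧ permVal σ (i + 1) < permVal σ (i + 2)


open Finset Equiv

namespace CovAux

variable {m : ℕ}

/-- the set of permutations whose relative order pattern at the 5 positions is `π`. -/
noncomputable def S (q : Fin 5 ↪ Fin m) (π : Perm (Fin 5)) : Finset (Perm (Fin m)) :=
  Finset.univ.filter fun σ => ∀ a b : Fin 5, σ (q a) < σ (q b) ↔ π a < π b

lemma exists_pattern (q : Fin 5 ↪ Fin m) (σ : Perm (Fin m)) :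
    ∃ π : Perm (Fin 5), ∀ a b : Fin 5, σ (q a) < σ (q b) ↔ π a < π b := by
  set v : Fin 5 → Fin m := fun a => σ (q a) with hv
  have hvinj : Function.Injective v := fun a b h => q.injective (σ.injective h)
  have hmono : StrictMono (v ∘ Tuple.sort v) :=
    (Tuple.monotone_sort v).strictMono_of_injective (hvinj.comp (Tuple.sort v).injective)
  refine ⟨(Tuple.sort v)⁻¹, fun a b => ?_⟩
  have h1 : ∀ a : Fin 5, v ((Tuple.sort v) ((Tuple.sort v)⁻¹ a)) = v a := by
    intro a; rw [Equiv.Perm.coe_inv, Equiv.apply_symm_apply]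
  constructor
  · intro h
    by_contra hc
    push_neg at hc
    rcases lt_or_eq_of_le hc with h2 | h2
    · have := hmono h2
      simp only [Function.comp, h1] at this
      exact absurd h (not_lt.2 this.le)
    · have : v b = v a := by rw [← h1 b, ← h1 a, h2]
      exact absurd h (by rw [hvinj this]; exact lt_irrefl _)
  · intro h
    have := hmono h
    simpa only [Function.comp, h1] using this

lemma pattern_unique {q : Fin 5 ↪ Fin m} {σ : Perm (Fin m)} {π π' : Perm (Fin 5)}
    (h : ∀ a b : Fin 5, σ (q a) < σ (q b) ↔ π a < π b)
    (h' : ∀ a b : Fin 5, σ (q a) < σ (q b) ↔ π' a < π' b) : π = π' := by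
  have key : ∀ a b : Fin 5, π a < π b ↔ π' a < π' b := fun a b => (h a b).symm.trans (h' a b)
  have hsm : StrictMono (π' ∘ π.symm : Fin 5 → Fin 5) := by
    intro x y hxy
    have := (key (π.symm x) (π.symm y)).1 (by simpa using hxy)
    simpa using this
  have : (π' ∘ π.symm : Fin 5 → Fin 5) = id := by
    haveI : WellFoundedLT (Fin 5) := inferInstance
    exact (hsm.range_inj (strictMono_id : StrictMono (id : Fin 5 → Fin 5))).1
      (by rw [(π'.surjective.comp π.symm.surjective).range_eq, Set.range_id])
  apply Equiv.ext; intro a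
  have := congrFun this (π a)
  simp only [Function.comp_apply, Equiv.symm_apply_apply, id_eq] at this
  exact this.symm

lemma card_S_eq (q : Fin 5 ↪ Fin m) (π : Perm (Fin 5)) : (S q π).card = (S q 1).card := by
  classical
  refine Finset.card_bij' (fun σ _ => σ * π⁻¹.viaEmbedding q) (fun σ _ => σ * π.viaEmbedding q)
    ?_ ?_ ?_ ?_
  · intro σ hσ
    simp only [S, mem_filter, mem_univ, true_and] at hσ ⊢
    intro a b
    simp only [Perm.mul_apply, Perm.viaEmbedding_apply, hσ, Perm.coe_inv, Equiv.apply_symm_apply,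
      Perm.one_apply]
  · intro σ hσ
    simp only [S, mem_filter, mem_univ, true_and] at hσ ⊢
    intro a b
    simp only [Perm.mul_apply, Perm.viaEmbedding_apply, hσ, Perm.one_apply]
  · intro σ _
    have h1 : π⁻¹.viaEmbedding q * π.viaEmbedding q = 1 := by
      rw [← Perm.viaEmbeddingHom_apply, ← Perm.viaEmbeddingHom_apply, ← map_mul]
      simp
    show σ * π⁻¹.viaEmbedding q * π.viaEmbedding q = σ
    rw [mul_assoc, h1, mul_one]
  · intro σ _
    have h1 : π.viaEmbedding q * π⁻¹.viaEmbedding q = 1 := by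
      rw [← Perm.viaEmbeddingHom_apply, ← Perm.viaEmbeddingHom_apply, ← map_mul]
      simp
    show σ * π.viaEmbedding q * π⁻¹.viaEmbedding q = σ
    rw [mul_assoc, h1, mul_one]

lemma sum_card_S (q : Fin 5 ↪ Fin m) :
    120 * (S q 1).card = Nat.factorial m := by
  classical
  have hdisj : ((Finset.univ : Finset (Perm (Fin 5))) : Set (Perm (Fin 5))).PairwiseDisjoint (S q) := by
    intro π _ π' _ hne
    refine Finset.disjoint_left.2 fun σ hσ hσ' => ?_
    simp only [S, mem_filter, mem_univ, true_and] at hσ hσ'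
    exact hne (pattern_unique hσ hσ')
  have hcover : (Finset.univ : Finset (Perm (Fin 5))).biUnion (S q) = Finset.univ := by
    refine Finset.eq_univ_of_forall fun σ => ?_
    obtain ⟨π, hπ⟩ := exists_pattern q σ
    exact Finset.mem_biUnion.2 ⟨π, Finset.mem_univ _, by simp [S, hπ]⟩
  have hcards : ∀ π ∈ (Finset.univ : Finset (Perm (Fin 5))), (S q π).card = (S q 1).card :=
    fun π _ => card_S_eq q π
  have h5 : (Finset.univ : Finset (Perm (Fin 5))).card = 120 := by
    rw [Finset.card_univ, Fintype.card_perm, Fintype.card_fin]; decide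
  have key : (Finset.univ : Finset (Perm (Fin m))).card = 120 * (S q 1).card := by
    conv_lhs => rw [← hcover]
    rw [Finset.card_biUnion hdisj, Finset.sum_congr rfl hcards, Finset.sum_const,
      smul_eq_mul, h5]
  rw [← key, Finset.card_univ, Fintype.card_perm, Fintype.card_fin]

lemma count_pattern (q : Fin 5 ↪ Fin m) (L : List (Fin 5 × Fin 5)) :
    (Finset.univ.filter fun σ : Perm (Fin m) =>
        ∀ ab ∈ L, σ (q ab.1) < σ (q ab.2)).card * 120 =
      (Finset.univ.filter fun π : Perm (Fin 5) => ∀ ab ∈ L, π ab.1 < π ab.2).card *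
        Nat.factorial m := by
  classical
  have hset : (Finset.univ.filter fun σ : Perm (Fin m) => ∀ ab ∈ L, σ (q ab.1) < σ (q ab.2)) =
      (Finset.univ.filter fun π : Perm (Fin 5) => ∀ ab ∈ L, π ab.1 < π ab.2).biUnion (S q) := by
    ext σ
    simp only [mem_filter, mem_univ, true_and, Finset.mem_biUnion, S]
    constructor
    · intro h
      obtain ⟨π, hπ⟩ := exists_pattern q σ
      exact ⟨π, fun ab hab => (hπ ab.1 ab.2).1 (h ab hab), fun a b => hπ a b⟩
    · rintro ⟨π, hπL, hπ⟩ ab hab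
      exact (hπ ab.1 ab.2).2 (hπL ab hab)
  have hdisj : ((Finset.univ.filter fun π : Perm (Fin 5) =>
      ∀ ab ∈ L, π ab.1 < π ab.2) : Set (Perm (Fin 5))).PairwiseDisjoint (S q) := by
    intro π _ π' _ hne
    refine Finset.disjoint_left.2 fun σ hσ hσ' => ?_
    simp only [S, mem_filter, mem_univ, true_and] at hσ hσ'
    exact hne (pattern_unique hσ hσ')
  rw [hset, Finset.card_biUnion hdisj]
  rw [Finset.sum_congr rfl fun π _ => card_S_eq q π, Finset.sum_const, smul_eq_mul,
    mul_assoc, mul_comm (S q 1).card 120, sum_card_S q]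

end CovAux

namespace CovAux

lemma count_pattern_q {m : ℕ} (L : List (Fin 5 × Fin 5)) (n : ℕ)
    (hn : (Finset.univ.filter fun π : Equiv.Perm (Fin 5) => ∀ ab ∈ L, π ab.1 < π ab.2).card = n)
    (q : Fin 5 ↪ Fin m) :
    ((Finset.univ.filter fun σ : Equiv.Perm (Fin m) =>
        ∀ ab ∈ L, σ (q ab.1) < σ (q ab.2)).card : ℚ) =
      n * (Nat.factorial m : ℚ) / 120 := by
  have h := count_pattern q L
  rw [hn] at h
  have h' : ((Finset.univ.filter fun σ : Equiv.Perm (Fin m) =>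
      ∀ ab ∈ L, σ (q ab.1) < σ (q ab.2)).card : ℚ) * 120 = n * (Nat.factorial m : ℚ) := by
    exact_mod_cast congrArg (Nat.cast : ℕ → ℚ) h
  rw [eq_div_iff (by norm_num : (120 : ℚ) ≠ 0)]
  exact h'

end CovAux

/-- For a uniformly random permutation `σ` of `{1, …, m}` with `m ≥ 5` and any
`2 ≤ i ≤ m-3`, the probability of
`{σ(i)<σ(i-1), σ(i+1)<σ(i+2), σ(i+1)<σ(i), σ(i+2)<σ(i+3)}` equals `1/20`;
consequently `Cov(1_{B_i}, 1_{B_{i+1}}) = −1/80`. -/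
theorem prob_B_adjacent_cov (m i : ℕ) (hm : 5 ≤ m) (hi1 : 2 ≤ i) (hi2 : i ≤ m - 3) :
    ((Finset.univ.filter fun σ : Equiv.Perm (Fin m) =>
        permVal σ i < permVal σ (i - 1) ∧ permVal σ (i + 1) < permVal σ (i + 2) ∧
          permVal σ (i + 1) < permVal σ i ∧
          permVal σ (i + 2) < permVal σ (i + 3)).card : ℚ) / (Nat.factorial m) = 1 / 20 ∧
    ((Finset.univ.filter fun σ : Equiv.Perm (Fin m) =>
          sharedEvent σ i ∧ sharedEvent σ (i + 1)).card : ℚ) / (Nat.factorial m) -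
        (((Finset.univ.filter fun σ : Equiv.Perm (Fin m) => sharedEvent σ i).card : ℚ) /
            (Nat.factorial m)) *
          (((Finset.univ.filter fun σ : Equiv.Perm (Fin m) =>
              sharedEvent σ (i + 1)).card : ℚ) / (Nat.factorial m)) = -(1 / 80) := by
  classical
  have hb : ∀ j : Fin 5, i - 2 + j.val < m := fun j => by have := j.isLt; omega
  set q : Fin 5 ↪ Fin m :=
    ⟨fun j => ⟨i - 2 + j.val, hb j⟩, by
      intro a b hab
      have : i - 2 + a.val = i - 2 + b.val := congrArg Fin.val hab
      exact Fin.ext (by omega)⟩ with hqdef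
  have hq : ∀ j : Fin 5, (q j : ℕ) = i - 2 + j.val := fun j => rfl
  have hpv : ∀ (σ : Equiv.Perm (Fin m)) (t : ℕ) (j : Fin 5), t - 1 = i - 2 + j.val →
      permVal σ t = (σ (q j) : ℕ) + 1 := by
    intro σ t j ht
    have hlt : t - 1 < m := by rw [ht]; exact hb j
    rw [permVal, dif_pos hlt]
    have hqe : (⟨t - 1, hlt⟩ : Fin m) = q j := by
      apply Fin.ext
      rw [hq]
      exact ht
    rw [hqe]
  have hA : ∀ σ : Equiv.Perm (Fin m), permVal σ (i - 1) = (σ (q 0) : ℕ) + 1 :=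
    fun σ => hpv σ (i - 1) 0 (by have : ((0 : Fin 5) : ℕ) = 0 := rfl; omega)
  have hB : ∀ σ : Equiv.Perm (Fin m), permVal σ i = (σ (q 1) : ℕ) + 1 :=
    fun σ => hpv σ i 1 (by have : ((1 : Fin 5) : ℕ) = 1 := rfl; omega)
  have hC : ∀ σ : Equiv.Perm (Fin m), permVal σ (i + 1) = (σ (q 2) : ℕ) + 1 :=
    fun σ => hpv σ (i + 1) 2 (by have : ((2 : Fin 5) : ℕ) = 2 := rfl; omega)
  have hD : ∀ σ : Equiv.Perm (Fin m), permVal σ (i + 2) = (σ (q 3) : ℕ) + 1 :=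
    fun σ => hpv σ (i + 2) 3 (by have : ((3 : Fin 5) : ℕ) = 3 := rfl; omega)
  have hE : ∀ σ : Equiv.Perm (Fin m), permVal σ (i + 3) = (σ (q 4) : ℕ) + 1 :=
    fun σ => hpv σ (i + 3) 4 (by have : ((4 : Fin 5) : ℕ) = 4 := rfl; omega)
  have hltq : ∀ (σ : Equiv.Perm (Fin m)) (a b : Fin 5),
      ((σ (q a) : ℕ) + 1 < (σ (q b) : ℕ) + 1) ↔ σ (q a) < σ (q b) := by
    intro σ a b
    rw [Fin.lt_def]
    omega
  have e1 : i + 1 - 1 = i := by omega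
  have e2 : i + 1 + 1 = i + 2 := by omega
  have e3 : i + 1 + 2 = i + 3 := by omega
  -- the three filter-set identifications
  have hf1 : (Finset.univ.filter fun σ : Equiv.Perm (Fin m) =>
        permVal σ i < permVal σ (i - 1) ∧ permVal σ (i + 1) < permVal σ (i + 2) ∧
          permVal σ (i + 1) < permVal σ i ∧ permVal σ (i + 2) < permVal σ (i + 3)) =
      Finset.univ.filter fun σ =>
        ∀ ab ∈ [((1 : Fin 5), (0 : Fin 5)), (2, 3), (2, 1), (3, 4)],
          σ (q ab.1) < σ (q ab.2) := by
    apply Finset.filter_congr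
    intro σ _
    simp only [List.forall_mem_cons, List.forall_mem_nil, and_true, hA σ, hB σ, hC σ, hD σ,
      hE σ, hltq σ]
    tauto
  have hf2 : (Finset.univ.filter fun σ : Equiv.Perm (Fin m) =>
        sharedEvent σ i ∧ sharedEvent σ (i + 1)) =
      Finset.univ.filter fun σ =>
        ∀ ab ∈ [((1 : Fin 5), (0 : Fin 5)), (2, 3), (2, 1), (3, 4)],
          σ (q ab.1) < σ (q ab.2) := by
    apply Finset.filter_congr
    intro σ _
    simp only [sharedEvent, e1, e2, e3, List.forall_mem_cons, List.forall_mem_nil, and_true,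
      hA σ, hB σ, hC σ, hD σ, hE σ, hltq σ]
    tauto
  have hf3 : (Finset.univ.filter fun σ : Equiv.Perm (Fin m) => sharedEvent σ i) =
      Finset.univ.filter fun σ =>
        ∀ ab ∈ [((1 : Fin 5), (0 : Fin 5)), ((2 : Fin 5), (3 : Fin 5))],
          σ (q ab.1) < σ (q ab.2) := by
    apply Finset.filter_congr
    intro σ _
    simp only [sharedEvent, List.forall_mem_cons, List.forall_mem_nil, and_true,
      hA σ, hB σ, hC σ, hD σ, hE σ, hltq σ]
    simp
  have hf4 : (Finset.univ.filter fun σ : Equiv.Perm (Fin m) => sharedEvent σ (i + 1)) =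
      Finset.univ.filter fun σ =>
        ∀ ab ∈ [((2 : Fin 5), (1 : Fin 5)), ((3 : Fin 5), (4 : Fin 5))],
          σ (q ab.1) < σ (q ab.2) := by
    apply Finset.filter_congr
    intro σ _
    simp only [sharedEvent, e1, e2, e3, List.forall_mem_cons, List.forall_mem_nil, and_true,
      hA σ, hB σ, hC σ, hD σ, hE σ, hltq σ]
    simp
  -- the pattern counts over Perm (Fin 5)
  have hn1 : (Finset.univ.filter fun π : Equiv.Perm (Fin 5) =>
      ∀ ab ∈ [((1 : Fin 5), (0 : Fin 5)), (2, 3), (2, 1), (3, 4)],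
        π ab.1 < π ab.2).card = 6 := by decide
  have hn2 : (Finset.univ.filter fun π : Equiv.Perm (Fin 5) =>
      ∀ ab ∈ [((1 : Fin 5), (0 : Fin 5)), ((2 : Fin 5), (3 : Fin 5))],
        π ab.1 < π ab.2).card = 30 := by decide
  have hn3 : (Finset.univ.filter fun π : Equiv.Perm (Fin 5) =>
      ∀ ab ∈ [((2 : Fin 5), (1 : Fin 5)), ((3 : Fin 5), (4 : Fin 5))],
        π ab.1 < π ab.2).card = 30 := by decide
  have hc1 := CovAux.count_pattern_q _ 6 hn1 q
  have hc2 := CovAux.count_pattern_q _ 30 hn2 q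
  have hc3 := CovAux.count_pattern_q _ 30 hn3 q
  have hFpos : (0 : ℚ) < (Nat.factorial m : ℚ) := by
    exact_mod_cast Nat.factorial_pos m
  have hFne : (Nat.factorial m : ℚ) ≠ 0 := ne_of_gt hFpos
  constructor
  · rw [hf1, hc1]
    field_simp
    ring
  · rw [hf2, hf3, hf4, hc1, hc2, hc3]
    field_simp
    ring
end

section
/- For a uniformly random permutation σ of {1,…,m} with m ≥ 7 and any 2 ≤ i ≤ m-5, the probability of {σ(i)<σ(i-1), σ(i+1)<σ(i+2), σ(i+3)<σ(i+2), σ(i+4)<σ(i+5)} equals 1/12; consequently Cov of the indicators of B_i and B_{i+3} equals 1/48. -/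
open Finset

/-- The rank permutation of an injective tuple of values. -/
noncomputable def rk {k m : ℕ} (v : Fin k → Fin m) (hv : Function.Injective v) :
    Equiv.Perm (Fin k) :=
  Equiv.ofBijective
    (fun j => ((Finset.image v univ).orderIsoOfFin
        (by rw [Finset.card_image_of_injective _ hv, Finset.card_univ, Fintype.card_fin])).symm
      ⟨v j, Finset.mem_image_of_mem _ (Finset.mem_univ j)⟩)
    (Finite.injective_iff_bijective.mp fun a b h =>
      hv (Subtype.mk_eq_mk.mp (((Finset.image v univ).orderIsoOfFin
        (by rw [Finset.card_image_of_injective _ hv, Finset.card_univ,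
          Fintype.card_fin])).symm.injective h)))

lemma rk_lt_iff {k m : ℕ} (v : Fin k → Fin m) (hv : Function.Injective v) (j j' : Fin k) :
    rk v hv j < rk v hv j' ↔ v j < v j' := by
  simp only [rk, Equiv.ofBijective_apply]
  rw [OrderIso.lt_iff_lt, Subtype.mk_lt_mk]

lemma rk_unique {k m : ℕ} (v : Fin k → Fin m) (hv : Function.Injective v)
    (u : Equiv.Perm (Fin k)) (h : ∀ j j', v j < v j' ↔ u j < u j') : u = rk v hv := by
  have hlt : ∀ x y : Fin k, rk v hv (u.symm x) < rk v hv (u.symm y) ↔ x < y := by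
    intro x y
    rw [rk_lt_iff, h]
    simp
  let w : Fin k ≃o Fin k :=
    { toEquiv := u.symm.trans (rk v hv)
      map_rel_iff' := by
        intro x y
        simp only [Equiv.trans_apply]
        constructor
        · intro hle
          by_contra hxy
          exact absurd ((hlt y x).mpr (lt_of_not_ge hxy)) (not_lt_of_ge hle)
        · intro hle
          by_contra hh
          exact absurd ((hlt y x).mp (lt_of_not_ge hh)) (not_lt_of_ge hle) }
  have hw : w = OrderIso.refl (Fin k) := Subsingleton.elim _ _
  ext j
  have := congrArg (fun (f : Fin k ≃o Fin k) => f (u j)) hw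
  simp only [w, OrderIso.refl_apply] at this
  have h2 : rk v hv (u.symm (u j)) = u j := this
  rw [Equiv.symm_apply_apply] at h2
  exact congrArg Fin.val h2.symm

/-- Embedding of `k` consecutive positions starting at `b` into `Fin m`. -/
def posEmb (m b k : ℕ) (h : b + k ≤ m) : Fin k ↪ Fin m :=
  ⟨fun j => ⟨b + j, by have := j.2; omega⟩, fun a b' hab => by
    apply Fin.ext
    have : b + (a : ℕ) = b + (b' : ℕ) := congrArg Fin.val hab
    omega⟩

/-- The pattern of `σ` at the `k` positions `b, …, b+k-1`. -/
noncomputable def pat {m : ℕ} (b k : ℕ) (h : b + k ≤ m) (σ : Equiv.Perm (Fin m)) :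
    Equiv.Perm (Fin k) :=
  rk (fun j => σ (posEmb m b k h j)) (fun a b' hab => (posEmb m b k h).injective (σ.injective hab))

lemma pat_lt_iff {m : ℕ} (b k : ℕ) (h : b + k ≤ m) (σ : Equiv.Perm (Fin m)) (j j' : Fin k) :
    pat b k h σ j < pat b k h σ j' ↔ σ (posEmb m b k h j) < σ (posEmb m b k h j') :=
  rk_lt_iff _ _ j j'

lemma pat_mul {m : ℕ} (b k : ℕ) (h : b + k ≤ m) (σ : Equiv.Perm (Fin m))
    (π : Equiv.Perm (Fin k)) :
    pat b k h (σ * π.viaFintypeEmbedding (posEmb m b k h)) = pat b k h σ * π := by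
  refine (rk_unique _ _ _ fun j j' => ?_).symm
  simp only [Equiv.Perm.mul_apply, Equiv.Perm.viaFintypeEmbedding_apply_image]
  rw [← pat_lt_iff b k h σ (π j) (π j')]

lemma pat_fiber_card {m : ℕ} (b k : ℕ) (h : b + k ≤ m) (c c' : Equiv.Perm (Fin k)) :
    (univ.filter fun σ : Equiv.Perm (Fin m) => pat b k h σ = c).card =
      (univ.filter fun σ : Equiv.Perm (Fin m) => pat b k h σ = c').card := by
  classical
  have key : ∀ d d' : Equiv.Perm (Fin k),
      (univ.filter fun σ : Equiv.Perm (Fin m) => pat b k h σ = d).card ≤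
        (univ.filter fun σ : Equiv.Perm (Fin m) => pat b k h σ = d').card := by
    intro d d'
    apply Finset.card_le_card_of_injOn
      (fun σ => σ * (d⁻¹ * d').viaFintypeEmbedding (posEmb m b k h))
    · intro σ hσ
      simp only [Finset.mem_coe, mem_filter, mem_univ, true_and] at hσ ⊢
      rw [pat_mul, hσ, ← mul_assoc, mul_inv_cancel, one_mul]
    · intro a _ a' _ hh
      exact mul_right_cancel hh
  exact le_antisymm (key c c') (key c' c)

lemma count_ratio {α β : Type*} [Fintype α] [Fintype β] [DecidableEq β] [Nonempty β]
    (F : α → β)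
    (hfib : ∀ b b' : β, (univ.filter fun a => F a = b).card =
      (univ.filter fun a => F a = b').card)
    (P : α → Prop) [DecidablePred P] (Q : β → Prop) [DecidablePred Q]
    (hPQ : ∀ a, P a ↔ Q (F a)) (h0 : 0 < Fintype.card α) :
    ((univ.filter P).card : ℚ) / (Fintype.card α) =
      ((univ.filter Q).card : ℚ) / (Fintype.card β) := by
  classical
  set b₀ := Classical.arbitrary β with hb₀
  set c := (univ.filter fun a => F a = b₀).card with hc
  have hα : Fintype.card α = Fintype.card β * c := by
    rw [← card_univ, Finset.card_eq_sum_card_fiberwise (f := F) (t := univ)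
      (fun a _ => mem_univ _)]
    rw [Finset.sum_congr rfl (fun b _ => hfib b b₀), Finset.sum_const, card_univ, smul_eq_mul]
  have hP : (univ.filter P).card = (univ.filter Q).card * c := by
    rw [Finset.card_eq_sum_card_fiberwise (f := F) (t := univ.filter Q)
      (fun a ha => by simp only [Finset.mem_coe, mem_filter, mem_univ, true_and] at ha ⊢; exact (hPQ a).mp ha)]
    rw [Finset.sum_congr rfl (fun b hb => ?_), Finset.sum_const, smul_eq_mul]
    have : (univ.filter P).filter (fun a => F a = b) = univ.filter (fun a => F a = b) := by
      ext a
      simp only [mem_filter, mem_univ, true_and, and_iff_right_iff_imp]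
      intro hab
      rw [hPQ, hab]
      exact (mem_filter.mp hb).2
    rw [this, hfib b b₀]
  have hcpos : 0 < c := by
    rcases Nat.eq_zero_or_pos c with h | h
    · rw [h, mul_zero] at hα; omega
    · exact h
  rw [hP, hα, Nat.cast_mul, Nat.cast_mul,
    mul_div_mul_right _ _ (by exact_mod_cast hcpos.ne' : (c : ℚ) ≠ 0)]

lemma event_prob {m : ℕ} (b k : ℕ) (h : b + k ≤ m)
    (P : Equiv.Perm (Fin m) → Prop) [DecidablePred P]
    (Q : Equiv.Perm (Fin k) → Prop) [DecidablePred Q]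
    (hPQ : ∀ σ, P σ ↔ Q (pat b k h σ)) :
    ((univ.filter P).card : ℚ) / (Nat.factorial m) =
      ((univ.filter Q).card : ℚ) / (Nat.factorial k) := by
  classical
  have h1 : (Nat.factorial m : ℚ) = (Fintype.card (Equiv.Perm (Fin m)) : ℚ) := by
    rw [Fintype.card_perm, Fintype.card_fin]
  have h2 : (Nat.factorial k : ℚ) = (Fintype.card (Equiv.Perm (Fin k)) : ℚ) := by
    rw [Fintype.card_perm, Fintype.card_fin]
  rw [h1, h2]
  exact count_ratio (pat b k h) (pat_fiber_card b k h) P Q hPQ Fintype.card_pos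

lemma permVal_lt_iff {m : ℕ} (b k : ℕ) (h : b + k ≤ m) (σ : Equiv.Perm (Fin m))
    (p q x y : ℕ) (hx : x < k) (hy : y < k) (hp : p = b + 1 + x) (hq : q = b + 1 + y) :
    permVal σ p < permVal σ q ↔ pat b k h σ ⟨x, hx⟩ < pat b k h σ ⟨y, hy⟩ := by
  subst hp hq
  have hv : ∀ (a : Fin k), permVal σ (b + 1 + (a : ℕ)) = (σ (posEmb m b k h a) : ℕ) + 1 := by
    intro a
    have hh : b + 1 + (a : ℕ) - 1 < m := by have := a.2; omega
    rw [permVal, dif_pos hh]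
    have : (⟨b + 1 + (a : ℕ) - 1, hh⟩ : Fin m) = posEmb m b k h a :=
      Fin.ext (by show b + 1 + (a : ℕ) - 1 = b + (a : ℕ); omega)
    rw [this]
  rw [show b + 1 + x = b + 1 + ((⟨x, hx⟩ : Fin k) : ℕ) from rfl,
    show b + 1 + y = b + 1 + ((⟨y, hy⟩ : Fin k) : ℕ) from rfl, hv, hv, pat_lt_iff]
  rw [Fin.lt_def]
  omega

set_option maxRecDepth 100000 in
set_option maxHeartbeats 4000000 in
/-- For a uniformly random permutation `σ` of `{1, …, m}` with `m ≥ 7` and any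
`2 ≤ i ≤ m-5`, the probability of
`{σ(i)<σ(i-1), σ(i+1)<σ(i+2), σ(i+3)<σ(i+2), σ(i+4)<σ(i+5)}` equals `1/12`;
consequently `Cov(1_{B_i}, 1_{B_{i+3}}) = 1/48`. -/
theorem prob_B_three_apart_cov (m i : ℕ) (hm : 7 ≤ m) (hi1 : 2 ≤ i) (hi2 : i ≤ m - 5) :
    ((Finset.univ.filter fun σ : Equiv.Perm (Fin m) =>
        permVal σ i < permVal σ (i - 1) ∧ permVal σ (i + 1) < permVal σ (i + 2) ∧
          permVal σ (i + 3) < permVal σ (i + 2) ∧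
          permVal σ (i + 4) < permVal σ (i + 5)).card : ℚ) / (Nat.factorial m) = 1 / 12 ∧
    ((Finset.univ.filter fun σ : Equiv.Perm (Fin m) =>
          sharedEvent σ i ∧ sharedEvent σ (i + 3)).card : ℚ) / (Nat.factorial m) -
        (((Finset.univ.filter fun σ : Equiv.Perm (Fin m) => sharedEvent σ i).card : ℚ) /
            (Nat.factorial m)) *
          (((Finset.univ.filter fun σ : Equiv.Perm (Fin m) =>
              sharedEvent σ (i + 3)).card : ℚ) / (Nat.factorial m)) = 1 / 48 := by
  have h7 : i - 2 + 7 ≤ m := by omega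
  have h4 : i - 2 + 4 ≤ m := by omega
  have h4' : i + 1 + 4 ≤ m := by omega
  have c420 : (univ.filter fun ρ : Equiv.Perm (Fin 7) =>
      ρ ⟨1, by norm_num⟩ < ρ ⟨0, by norm_num⟩ ∧ ρ ⟨2, by norm_num⟩ < ρ ⟨3, by norm_num⟩ ∧
      ρ ⟨4, by norm_num⟩ < ρ ⟨3, by norm_num⟩ ∧
      ρ ⟨5, by norm_num⟩ < ρ ⟨6, by norm_num⟩).card = 420 := by decide
  have c6 : (univ.filter fun ρ : Equiv.Perm (Fin 4) =>
      ρ ⟨1, by norm_num⟩ < ρ ⟨0, by norm_num⟩ ∧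
      ρ ⟨2, by norm_num⟩ < ρ ⟨3, by norm_num⟩).card = 6 := by decide
  have hjoint : ((Finset.univ.filter fun σ : Equiv.Perm (Fin m) =>
      permVal σ i < permVal σ (i - 1) ∧ permVal σ (i + 1) < permVal σ (i + 2) ∧
        permVal σ (i + 3) < permVal σ (i + 2) ∧
        permVal σ (i + 4) < permVal σ (i + 5)).card : ℚ) / (Nat.factorial m) = 1 / 12 := by
    rw [event_prob (i - 2) 7 h7 _ (fun ρ : Equiv.Perm (Fin 7) =>
        ρ ⟨1, by norm_num⟩ < ρ ⟨0, by norm_num⟩ ∧ ρ ⟨2, by norm_num⟩ < ρ ⟨3, by norm_num⟩ ∧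
        ρ ⟨4, by norm_num⟩ < ρ ⟨3, by norm_num⟩ ∧ ρ ⟨5, by norm_num⟩ < ρ ⟨6, by norm_num⟩)
      (fun σ => by
        rw [permVal_lt_iff (i - 2) 7 h7 σ i (i - 1) 1 0 (by norm_num) (by norm_num)
              (by omega) (by omega),
            permVal_lt_iff (i - 2) 7 h7 σ (i + 1) (i + 2) 2 3 (by norm_num) (by norm_num)
              (by omega) (by omega),
            permVal_lt_iff (i - 2) 7 h7 σ (i + 3) (i + 2) 4 3 (by norm_num) (by norm_num)
              (by omega) (by omega),
            permVal_lt_iff (i - 2) 7 h7 σ (i + 4) (i + 5) 5 6 (by norm_num) (by norm_num)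
              (by omega) (by omega)]),
      c420]
    norm_num [Nat.factorial]
  have hB1 : ((Finset.univ.filter fun σ : Equiv.Perm (Fin m) =>
      sharedEvent σ i).card : ℚ) / (Nat.factorial m) = 1 / 4 := by
    rw [event_prob (i - 2) 4 h4 _ (fun ρ : Equiv.Perm (Fin 4) =>
        ρ ⟨1, by norm_num⟩ < ρ ⟨0, by norm_num⟩ ∧ ρ ⟨2, by norm_num⟩ < ρ ⟨3, by norm_num⟩)
      (fun σ => by
        rw [show sharedEvent σ i ↔ (permVal σ i < permVal σ (i - 1) ∧
            permVal σ (i + 1) < permVal σ (i + 2)) from Iff.rfl,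
          permVal_lt_iff (i - 2) 4 h4 σ i (i - 1) 1 0 (by norm_num) (by norm_num)
            (by omega) (by omega),
          permVal_lt_iff (i - 2) 4 h4 σ (i + 1) (i + 2) 2 3 (by norm_num) (by norm_num)
            (by omega) (by omega)]),
      c6]
    norm_num [Nat.factorial]
  have hB2 : ((Finset.univ.filter fun σ : Equiv.Perm (Fin m) =>
      sharedEvent σ (i + 3)).card : ℚ) / (Nat.factorial m) = 1 / 4 := by
    rw [event_prob (i + 1) 4 h4' _ (fun ρ : Equiv.Perm (Fin 4) =>
        ρ ⟨1, by norm_num⟩ < ρ ⟨0, by norm_num⟩ ∧ ρ ⟨2, by norm_num⟩ < ρ ⟨3, by norm_num⟩)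
      (fun σ => by
        rw [show sharedEvent σ (i + 3) ↔ (permVal σ (i + 3) < permVal σ (i + 3 - 1) ∧
            permVal σ (i + 3 + 1) < permVal σ (i + 3 + 2)) from Iff.rfl,
          permVal_lt_iff (i + 1) 4 h4' σ (i + 3) (i + 3 - 1) 1 0 (by norm_num) (by norm_num)
            (by omega) (by omega),
          permVal_lt_iff (i + 1) 4 h4' σ (i + 3 + 1) (i + 3 + 2) 2 3 (by norm_num) (by norm_num)
            (by omega) (by omega)]),
      c6]
    norm_num [Nat.factorial]
  have hBB : (Finset.univ.filter fun σ : Equiv.Perm (Fin m) =>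
      sharedEvent σ i ∧ sharedEvent σ (i + 3)).card =
      (Finset.univ.filter fun σ : Equiv.Perm (Fin m) =>
        permVal σ i < permVal σ (i - 1) ∧ permVal σ (i + 1) < permVal σ (i + 2) ∧
          permVal σ (i + 3) < permVal σ (i + 2) ∧
          permVal σ (i + 4) < permVal σ (i + 5)).card := by
    congr 1
    apply Finset.filter_congr
    intro σ _
    simp only [sharedEvent, show i + 3 - 1 = i + 2 from by omega,
      show i + 3 + 1 = i + 4 from by omega, show i + 3 + 2 = i + 5 from by omega]
    tauto
  refine ⟨hjoint, ?_⟩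
  rw [hBB, hjoint, hB1, hB2]
  norm_num
end

section
/- Let m(n,k) be the number of permutations of {1,…,n} with exactly k local minima, where position 1 (resp. n) counts as a local minimum if σ(1)<σ(2) (resp. σ(n)<σ(n-1)), and an interior position i counts if σ(i)<min(σ(i-1),σ(i+1)). Then for n ≥ 2, m(n,k) = 2k·m(n-1,k) + (n-2(k-1))·m(n-1,k-1). -/
/-- Position `i` of the permutation `σ` of `{1, …, m}` is a local minimum: either `i = 1`
and `σ(1) < σ(2)`, or `i = m` and `σ(m) < σ(m-1)`, or `i` is interior and
`σ(i) < min(σ(i-1), σ(i+1))`. -/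
abbrev isLocalMin {m : ℕ} (σ : Equiv.Perm (Fin m)) (i : ℕ) : Prop :=
  (i = 1 ∧ permVal σ 1 < permVal σ 2) ∨ (i = m ∧ permVal σ m < permVal σ (m - 1)) ∨
    (2 ≤ i ∧ i ≤ m - 1 ∧ permVal σ i < min (permVal σ (i - 1)) (permVal σ (i + 1)))

/-- `m(n, k)`: the number of permutations of `{1, …, n}` with exactly `k` local minima
(the index `k` is an integer so that `m(n, k) = 0` for `k < 0`). -/
def numPermsWithLocalMins (n : ℕ) (k : ℤ) : ℕ :=
  (Finset.univ.filter fun σ : Equiv.Perm (Fin n) =>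
    (((Finset.Icc 1 n).filter fun i => isLocalMin σ i).card : ℤ) = k).card

namespace LMR
open Equiv Finset

variable {m : ℕ}

def insertMin (p : Fin (m+1)) (τ : Equiv.Perm (Fin m)) : Equiv.Perm (Fin (m+1)) :=
  (finSuccEquiv' p).trans ((τ.optionCongr).trans (finSuccEquiv m).symm)

lemma insertMin_at (p : Fin (m+1)) (τ : Equiv.Perm (Fin m)) : insertMin p τ p = 0 := by
  simp [insertMin]

lemma insertMin_below (p : Fin (m+1)) (τ : Equiv.Perm (Fin m)) (j : Fin m)
    (h : j.castSucc < p) : insertMin p τ j.castSucc = (τ j).succ := by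
  simp [insertMin, finSuccEquiv'_below h]

lemma insertMin_above (p : Fin (m+1)) (τ : Equiv.Perm (Fin m)) (j : Fin m)
    (h : p ≤ j.castSucc) : insertMin p τ j.succ = (τ j).succ := by
  simp [insertMin, finSuccEquiv'_above h]

lemma permVal_eq {M : ℕ} (σ : Equiv.Perm (Fin M)) (i : ℕ) (h : i - 1 < M) :
    permVal σ i = (σ ⟨i - 1, h⟩ : ℕ) + 1 := dif_pos h

lemma permVal_pos {M : ℕ} (σ : Equiv.Perm (Fin M)) (i : ℕ) (h : i - 1 < M) :
    1 ≤ permVal σ i := by rw [permVal_eq σ i h]; omega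

lemma w_at (p : Fin (m+1)) (τ : Equiv.Perm (Fin m)) :
    permVal (insertMin p τ) ((p : ℕ) + 1) = 1 := by
  have h : (p : ℕ) + 1 - 1 < m + 1 := by omega
  rw [permVal_eq _ _ h]
  have hp : (⟨(p : ℕ) + 1 - 1, h⟩ : Fin (m+1)) = p := by ext; simp
  rw [hp, insertMin_at]
  simp

lemma w_below (p : Fin (m+1)) (τ : Equiv.Perm (Fin m)) (i : ℕ) (h1 : 1 ≤ i)
    (h2 : i ≤ (p : ℕ)) : permVal (insertMin p τ) i = permVal τ i + 1 := by
  have hm : i - 1 < m := by have := p.isLt; omega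
  have h : i - 1 < m + 1 := by omega
  rw [permVal_eq _ _ h, permVal_eq τ i hm]
  have hc : (⟨i - 1, h⟩ : Fin (m+1)) = (⟨i - 1, hm⟩ : Fin m).castSucc := by ext; rfl
  rw [hc, insertMin_below p τ _ (by simp [Fin.lt_def]; omega)]
  simp

lemma w_above (p : Fin (m+1)) (τ : Equiv.Perm (Fin m)) (i : ℕ) (h1 : (p : ℕ) + 1 < i)
    (h2 : i ≤ m + 1) : permVal (insertMin p τ) i = permVal τ (i - 1) + 1 := by
  have hm : i - 1 - 1 < m := by omega
  have h : i - 1 < m + 1 := by omega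
  rw [permVal_eq _ _ h, permVal_eq τ (i-1) hm]
  have hc : (⟨i - 1, h⟩ : Fin (m+1)) = (⟨i - 1 - 1, hm⟩ : Fin m).succ := by
    ext; simp; omega
  rw [hc, insertMin_above p τ _ (by simp [Fin.le_def]; omega)]
  simp

lemma not_adjacent (τ : Equiv.Perm (Fin m)) (j : ℕ) (h1 : 1 ≤ j) (h2 : j + 1 ≤ m)
    (hA : isLocalMin τ j) (hB : isLocalMin τ (j + 1)) : False := by
  have key1 : permVal τ j < permVal τ (j + 1) := by
    rcases hA with ⟨hj, hv⟩ | ⟨hj, hv⟩ | ⟨_, _, hv⟩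
    · subst hj; simpa using hv
    · omega
    · exact lt_of_lt_of_le hv (min_le_right _ _)
  have key2 : permVal τ (j + 1) < permVal τ j := by
    rcases hB with ⟨hj, hv⟩ | ⟨hj, hv⟩ | ⟨_, _, hv⟩
    · omega
    · subst hj; simpa using hv
    · have := lt_of_lt_of_le hv (min_le_left _ _); simpa using this
  omega

lemma isLocalMin_insertMin (hm : 1 ≤ m) (p : Fin (m+1)) (τ : Equiv.Perm (Fin m)) (i : ℕ)
    (hi1 : 1 ≤ i) (hi2 : i ≤ m + 1) :
    isLocalMin (insertMin p τ) i ↔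
      (i = (p : ℕ) + 1 ∨ ((i + 1 < (p : ℕ) + 1) ∧ isLocalMin τ i) ∨
        ((p : ℕ) + 1 + 1 < i ∧ isLocalMin τ (i - 1))) := by
  set q := (p : ℕ) + 1 with hq
  have hqle : q ≤ m + 1 := by have := p.isLt; omega
  have hq1 : 1 ≤ q := by omega
  have hvpos : ∀ j : ℕ, j - 1 < m → 1 ≤ permVal τ j := fun j h => permVal_pos τ j h
  have hwq : permVal (insertMin p τ) q = 1 := by rw [hq]; exact w_at p τ
  have hwb : ∀ j : ℕ, 1 ≤ j → j < q → permVal (insertMin p τ) j = permVal τ j + 1 := by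
    intro j a b; exact w_below p τ j a (by omega)
  have hwa : ∀ j : ℕ, q < j → j ≤ m + 1 →
      permVal (insertMin p τ) j = permVal τ (j - 1) + 1 := by
    intro j a b; exact w_above p τ j (by omega) b
  rcases (show i = q ∨ i + 1 = q ∨ i = q + 1 ∨ i + 1 < q ∨ q + 1 < i by omega)
    with hc | hc | hc | hc | hc
  · -- i = q
    subst hc
    constructor
    · intro _; exact Or.inl rfl
    · intro _
      rcases (show q = 1 ∨ q = m + 1 ∨ (2 ≤ q ∧ q + 1 ≤ m + 1) by omega) with h | h | h
      · left; refine ⟨h, ?_⟩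
        have e1 : permVal (insertMin p τ) 1 = 1 := by rw [h] at hwq; exact hwq
        have e2 : permVal (insertMin p τ) 2 = permVal τ (2 - 1) + 1 :=
          hwa 2 (by omega) (by omega)
        have p1 : 1 ≤ permVal τ (2 - 1) := hvpos _ (by omega)
        omega
      · right; left; refine ⟨h, ?_⟩
        have e1 : permVal (insertMin p τ) (m + 1) = 1 := by rw [h] at hwq; exact hwq
        have e2 : permVal (insertMin p τ) m = permVal τ m + 1 := hwb m (by omega) (by omega)
        have p1 : 1 ≤ permVal τ m := hvpos _ (by omega)
        simp only [Nat.add_sub_cancel]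
        omega
      · right; right
        refine ⟨h.1, by omega, ?_⟩
        have e1 : permVal (insertMin p τ) (q - 1) = permVal τ (q - 1) + 1 :=
          hwb (q - 1) (by omega) (by omega)
        have e2 : permVal (insertMin p τ) (q + 1) = permVal τ (q + 1 - 1) + 1 :=
          hwa (q + 1) (by omega) (by omega)
        have p1 : 1 ≤ permVal τ (q - 1) := hvpos _ (by omega)
        have p2 : 1 ≤ permVal τ (q + 1 - 1) := hvpos _ (by omega)
        omega
  · -- i + 1 = q
    constructor
    · rintro (⟨h1, hv⟩ | ⟨h1, hv⟩ | ⟨h1, h2, hv⟩) <;> exfalso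
      · have e1 : permVal (insertMin p τ) 1 = permVal τ 1 + 1 := hwb 1 (by omega) (by omega)
        have e2 : permVal (insertMin p τ) 2 = 1 := by
          rw [show (2 : ℕ) = q by omega]; exact hwq
        omega
      · omega
      · have e1 : permVal (insertMin p τ) (i + 1) = 1 := by rw [hc]; exact hwq
        have e2 : permVal (insertMin p τ) i = permVal τ i + 1 := hwb i hi1 (by omega)
        omega
    · rintro (h | ⟨h, -⟩ | ⟨h, -⟩) <;> omega
  · -- i = q + 1
    constructor
    · rintro (⟨h1, hv⟩ | ⟨h1, hv⟩ | ⟨h1, h2, hv⟩) <;> exfalso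
      · omega
      · have e1 : permVal (insertMin p τ) (m + 1 - 1) = 1 := by
          rw [show m + 1 - 1 = q by omega]; exact hwq
        have e2 : permVal (insertMin p τ) (m + 1) = permVal τ (m + 1 - 1) + 1 :=
          hwa (m + 1) (by omega) (by omega)
        omega
      · have e1 : permVal (insertMin p τ) (i - 1) = 1 := by
          rw [show i - 1 = q by omega]; exact hwq
        have e2 : permVal (insertMin p τ) i = permVal τ (i - 1) + 1 :=
          hwa i (by omega) (by omega)
        omega
    · rintro (h | ⟨h, -⟩ | ⟨h, -⟩) <;> omega
  · -- i + 1 < q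
    constructor
    · rintro (⟨h1, hv⟩ | ⟨h1, hv⟩ | ⟨h1, h2, hv⟩)
      · right; left; refine ⟨hc, Or.inl ⟨h1, ?_⟩⟩
        have e1 : permVal (insertMin p τ) 1 = permVal τ 1 + 1 := hwb 1 (by omega) (by omega)
        have e2 : permVal (insertMin p τ) 2 = permVal τ 2 + 1 := hwb 2 (by omega) (by omega)
        omega
      · omega
      · right; left
        refine ⟨hc, Or.inr (Or.inr ⟨h1, by omega, ?_⟩)⟩
        have e0 : permVal (insertMin p τ) i = permVal τ i + 1 := hwb i (by omega) (by omega)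
        have e1 : permVal (insertMin p τ) (i - 1) = permVal τ (i - 1) + 1 :=
          hwb (i - 1) (by omega) (by omega)
        have e2 : permVal (insertMin p τ) (i + 1) = permVal τ (i + 1) + 1 :=
          hwb (i + 1) (by omega) (by omega)
        omega
    · rintro (h | ⟨-, hL⟩ | ⟨h, -⟩)
      · omega
      · rcases hL with ⟨h1, hv⟩ | ⟨h1, hv⟩ | ⟨h1, h2, hv⟩
        · left; refine ⟨h1, ?_⟩
          have e1 : permVal (insertMin p τ) 1 = permVal τ 1 + 1 := hwb 1 (by omega) (by omega)
          have e2 : permVal (insertMin p τ) 2 = permVal τ 2 + 1 := hwb 2 (by omega) (by omega)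
          omega
        · omega
        · right; right
          refine ⟨h1, by omega, ?_⟩
          have e0 : permVal (insertMin p τ) i = permVal τ i + 1 := hwb i (by omega) (by omega)
          have e1 : permVal (insertMin p τ) (i - 1) = permVal τ (i - 1) + 1 :=
            hwb (i - 1) (by omega) (by omega)
          have e2 : permVal (insertMin p τ) (i + 1) = permVal τ (i + 1) + 1 :=
            hwb (i + 1) (by omega) (by omega)
          omega
      · omega
  · -- q + 1 < i
    constructor
    · rintro (⟨h1, hv⟩ | ⟨h1, hv⟩ | ⟨h1, h2, hv⟩)
      · omega
      · right; right
        refine ⟨by omega, Or.inr (Or.inl ⟨by omega, ?_⟩)⟩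
        have e1 : permVal (insertMin p τ) (m + 1) = permVal τ (m + 1 - 1) + 1 :=
          hwa (m + 1) (by omega) (by omega)
        have e2 : permVal (insertMin p τ) m = permVal τ (m - 1) + 1 :=
          hwa m (by omega) (by omega)
        simp only [Nat.add_sub_cancel] at e1 hv
        omega
      · right; right
        refine ⟨by omega, Or.inr (Or.inr ⟨by omega, by omega, ?_⟩)⟩
        have e0 : permVal (insertMin p τ) i = permVal τ (i - 1) + 1 :=
          hwa i (by omega) (by omega)
        have e1 : permVal (insertMin p τ) (i - 1) = permVal τ (i - 1 - 1) + 1 :=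
          hwa (i - 1) (by omega) (by omega)
        have e2 : permVal (insertMin p τ) (i + 1) = permVal τ (i + 1 - 1) + 1 :=
          hwa (i + 1) (by omega) (by omega)
        rw [show i + 1 - 1 = i by omega] at e2
        rw [show i - 1 + 1 = i by omega]
        omega
    · rintro (h | ⟨h, -⟩ | ⟨-, hR⟩)
      · omega
      · omega
      · rcases hR with ⟨h1, hv⟩ | ⟨h1, hv⟩ | ⟨h1, h2, hv⟩
        · omega
        · right; left
          refine ⟨by omega, ?_⟩
          have e1 : permVal (insertMin p τ) (m + 1) = permVal τ (m + 1 - 1) + 1 :=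
            hwa (m + 1) (by omega) (by omega)
          have e2 : permVal (insertMin p τ) m = permVal τ (m - 1) + 1 :=
            hwa m (by omega) (by omega)
          simp only [Nat.add_sub_cancel] at e1 ⊢
          omega
        · right; right
          refine ⟨by omega, by omega, ?_⟩
          have e0 : permVal (insertMin p τ) i = permVal τ (i - 1) + 1 :=
            hwa i (by omega) (by omega)
          have e1 : permVal (insertMin p τ) (i - 1) = permVal τ (i - 1 - 1) + 1 :=
            hwa (i - 1) (by omega) (by omega)
          have e2 : permVal (insertMin p τ) (i + 1) = permVal τ (i + 1 - 1) + 1 :=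
            hwa (i + 1) (by omega) (by omega)
          rw [show i + 1 - 1 = i by omega] at e2
          rw [show i - 1 + 1 = i by omega] at hv
          omega

end LMR
section part2
open Equiv Finset
namespace LMR
variable {m : ℕ}

lemma card_localMin_insertMin (hm : 1 ≤ m) (p : Fin (m+1)) (τ : Equiv.Perm (Fin m)) :
    ((Icc 1 (m+1)).filter fun i => isLocalMin (insertMin p τ) i).card
      = (if ((p : ℕ) ∈ (Icc 1 m).filter (fun i => isLocalMin τ i)
            ∨ (p : ℕ) + 1 ∈ (Icc 1 m).filter (fun i => isLocalMin τ i))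
          then ((Icc 1 m).filter fun i => isLocalMin τ i).card
          else ((Icc 1 m).filter fun i => isLocalMin τ i).card + 1) := by
  set S := (Icc 1 m).filter (fun i => isLocalMin τ i) with hS
  set q := (p : ℕ) + 1 with hq
  have hqle : q ≤ m + 1 := by have := p.isLt; omega
  have hSsub : ∀ i ∈ S, 1 ≤ i ∧ i ≤ m := by
    intro i hi; rw [hS, mem_filter, mem_Icc] at hi; exact hi.1
  have hmemS : ∀ i : ℕ, i ∈ S ↔ ((1 ≤ i ∧ i ≤ m) ∧ isLocalMin τ i) := by
    intro i; rw [hS, mem_filter, mem_Icc]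
  -- the set identity
  have hset : ((Icc 1 (m+1)).filter fun i => isLocalMin (insertMin p τ) i)
      = insert q ((S.filter fun i => i + 1 < q) ∪ (S.filter fun i => q < i).image (· + 1)) := by
    ext i
    simp only [mem_filter, mem_Icc, mem_insert, mem_union, mem_image, hmemS]
    constructor
    · rintro ⟨⟨a, b⟩, hmin⟩
      rcases (isLocalMin_insertMin hm p τ i a b).mp hmin with h | ⟨h, hL⟩ | ⟨h, hL⟩
      · left; exact h
      · right; left
        refine ⟨⟨⟨by omega, by omega⟩, hL⟩, h⟩
      · right; right
        exact ⟨i - 1, ⟨⟨⟨by omega, by omega⟩, hL⟩, by omega⟩, by omega⟩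
    · rintro (h | ⟨⟨⟨r1, r2⟩, hL⟩, hlt⟩ | ⟨j, ⟨⟨⟨r1, r2⟩, hL⟩, hlt⟩, rfl⟩)
      · subst h
        refine ⟨⟨by omega, by omega⟩, ?_⟩
        exact (isLocalMin_insertMin hm p τ q (by omega) (by omega)).mpr (Or.inl rfl)
      · refine ⟨⟨by omega, by omega⟩, ?_⟩
        exact (isLocalMin_insertMin hm p τ i (by omega) (by omega)).mpr
          (Or.inr (Or.inl ⟨hlt, hL⟩))
      · refine ⟨⟨by omega, by omega⟩, ?_⟩
        refine (isLocalMin_insertMin hm p τ (j+1) (by omega) (by omega)).mpr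
          (Or.inr (Or.inr ⟨by omega, ?_⟩))
        simpa using hL
  have hq_not : q ∉ ((S.filter fun i => i + 1 < q) ∪ (S.filter fun i => q < i).image (· + 1)) := by
    simp only [mem_union, mem_filter, mem_image, not_or]
    constructor
    · rintro ⟨-, h⟩; omega
    · rintro ⟨j, ⟨-, h⟩, h2⟩; omega
  have hdisj : Disjoint (S.filter fun i => i + 1 < q) ((S.filter fun i => q < i).image (· + 1)) := by
    rw [Finset.disjoint_left]
    rintro a ha hb
    rw [mem_filter] at ha
    simp only [mem_image, mem_filter] at hb
    obtain ⟨j, ⟨-, hj⟩, hj2⟩ := hb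
    omega
  have hcard1 : ((Icc 1 (m+1)).filter fun i => isLocalMin (insertMin p τ) i).card
      = (S.filter fun i => i + 1 < q).card + (S.filter fun i => q < i).card + 1 := by
    rw [hset, card_insert_of_notMem hq_not, card_union_of_disjoint hdisj,
      card_image_of_injective _ (add_left_injective 1)]
  -- partition of S
  have hpart1 : (S.filter fun i => i + 1 < q).card
      + (S.filter fun i => ¬(i + 1 < q)).card = S.card :=
    Finset.card_filter_add_card_filter_not _
  have hpart2 : ((S.filter fun i => ¬(i + 1 < q)).filter fun i => q < i).card
      + ((S.filter fun i => ¬(i + 1 < q)).filter fun i => ¬ (q < i)).card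
      = (S.filter fun i => ¬(i + 1 < q)).card :=
    Finset.card_filter_add_card_filter_not _
  have hBB : (S.filter fun i => ¬(i + 1 < q)).filter (fun i => q < i)
      = S.filter fun i => q < i := by
    rw [filter_filter]
    apply filter_congr
    intro x _
    constructor
    · rintro ⟨-, h⟩; exact h
    · intro h; exact ⟨by omega, h⟩
  have hF3 : (S.filter fun i => ¬(i + 1 < q)).filter (fun i => ¬ (q < i))
      = S.filter fun i => i = (p : ℕ) ∨ i = q := by
    rw [filter_filter]
    apply filter_congr
    intro x hx
    have := hSsub x hx
    constructor
    · rintro ⟨h1, h2⟩; omega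
    · intro h; omega
  rw [hBB, hF3] at hpart2
  -- non-adjacency of minima
  have hnotboth : ¬ ((p : ℕ) ∈ S ∧ q ∈ S) := by
    rintro ⟨h1, h2⟩
    have b1 := hSsub _ h1
    have b2 := hSsub _ h2
    rw [hS, mem_filter] at h1 h2
    exact not_adjacent τ (p : ℕ) (by omega) (by omega) h1.2 (by rw [← hq]; exact h2.2)
  by_cases hadj : ((p : ℕ) ∈ S ∨ q ∈ S)
  · rw [if_pos hadj]
    have hC : (S.filter fun i => i = (p : ℕ) ∨ i = q).card = 1 := by
      rcases hadj with h | h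
      · have : (S.filter fun i => i = (p : ℕ) ∨ i = q) = {(p : ℕ)} := by
          ext x
          simp only [mem_filter, mem_singleton]
          constructor
          · rintro ⟨hx, h2 | h2⟩
            · exact h2
            · exact absurd ⟨h, h2 ▸ hx⟩ hnotboth
          · rintro rfl; exact ⟨h, Or.inl rfl⟩
        rw [this, card_singleton]
      · have : (S.filter fun i => i = (p : ℕ) ∨ i = q) = {q} := by
          ext x
          simp only [mem_filter, mem_singleton]
          constructor
          · rintro ⟨hx, h2 | h2⟩
            · exact absurd ⟨h2 ▸ hx, h⟩ hnotboth
            · exact h2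
          · rintro rfl; exact ⟨h, Or.inr rfl⟩
        rw [this, card_singleton]
    omega
  · rw [if_neg hadj]
    push_neg at hadj
    have hC : (S.filter fun i => i = (p : ℕ) ∨ i = q).card = 0 := by
      rw [card_eq_zero]
      rw [Finset.eq_empty_iff_forall_notMem]
      intro x hx
      rw [mem_filter] at hx
      rcases hx.2 with h | h
      · exact hadj.1 (h ▸ hx.1)
      · exact hadj.2 (h ▸ hx.1)
    omega

lemma card_adj (τ : Equiv.Perm (Fin m)) :
    ((range (m+1)).filter fun j =>
        (j ∈ (Icc 1 m).filter (fun i => isLocalMin τ i)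
          ∨ j + 1 ∈ (Icc 1 m).filter (fun i => isLocalMin τ i))).card
      = 2 * ((Icc 1 m).filter (fun i => isLocalMin τ i)).card := by
  set S := (Icc 1 m).filter (fun i => isLocalMin τ i) with hS
  have hSsub : ∀ i ∈ S, 1 ≤ i ∧ i ≤ m := by
    intro i hi; rw [hS, mem_filter, mem_Icc] at hi; exact hi.1
  have hset : ((range (m+1)).filter fun j => (j ∈ S ∨ j + 1 ∈ S))
      = S ∪ S.image (· - 1) := by
    ext j
    simp only [mem_filter, mem_range, mem_union, mem_image]
    constructor
    · rintro ⟨hr, h | h⟩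
      · left; exact h
      · right; exact ⟨j + 1, h, by omega⟩
    · rintro (h | ⟨i, hi, rfl⟩)
      · have := hSsub _ h; exact ⟨by omega, Or.inl h⟩
      · have := hSsub _ hi
        refine ⟨by omega, Or.inr ?_⟩
        rw [show i - 1 + 1 = i by omega]
        exact hi
  have hdisj : Disjoint S (S.image (· - 1)) := by
    rw [Finset.disjoint_left]
    intro a ha hb
    simp only [mem_image] at hb
    obtain ⟨i, hi, hi2⟩ := hb
    have b1 := hSsub _ ha
    have b2 := hSsub _ hi
    have hia : i = a + 1 := by omega
    rw [hS, mem_filter] at ha hi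
    exact not_adjacent τ a (by omega) (by omega) ha.2 (by rw [← hia]; exact hi.2)
  have hinj : Set.InjOn (· - 1) S := by
    intro a ha b hb hab
    have := hSsub _ ha; have := hSsub _ hb
    simp only at hab
    omega
  rw [hset, card_union_of_disjoint hdisj, card_image_of_injOn hinj]
  ring

end LMR
end part2
section part3
open Equiv Finset
namespace LMR
variable {m : ℕ}

def lcount {M : ℕ} (σ : Equiv.Perm (Fin M)) : ℕ :=
  ((Finset.Icc 1 M).filter fun i => isLocalMin σ i).card

lemma insertMin_succAbove (p : Fin (m+1)) (τ : Equiv.Perm (Fin m)) (j : Fin m) :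
    insertMin p τ (p.succAbove j) = (τ j).succ := by
  rcases lt_or_ge j.castSucc p with h | h
  · rw [Fin.succAbove_of_castSucc_lt _ _ h]; exact insertMin_below p τ j h
  · rw [Fin.succAbove_of_le_castSucc _ _ h]; exact insertMin_above p τ j h

lemma insertMin_injective :
    Function.Injective (fun x : Fin (m+1) × Equiv.Perm (Fin m) => insertMin x.1 x.2) := by
  rintro ⟨p, τ⟩ ⟨p', τ'⟩ h
  simp only at h
  have hp : p = p' := by
    apply (insertMin p' τ').injective
    rw [insertMin_at p' τ', ← h, insertMin_at p τ]
  subst hp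
  have hτ : τ = τ' := by
    apply Equiv.ext
    intro j
    have h1 : insertMin p τ (p.succAbove j) = insertMin p τ' (p.succAbove j) := by rw [h]
    rw [insertMin_succAbove, insertMin_succAbove] at h1
    exact Fin.succ_injective _ h1
  rw [hτ]

lemma insertMin_bijective :
    Function.Bijective (fun x : Fin (m+1) × Equiv.Perm (Fin m) => insertMin x.1 x.2) := by
  rw [Fintype.bijective_iff_injective_and_card]
  refine ⟨insertMin_injective, ?_⟩
  simp [Fintype.card_perm, Nat.factorial_succ]

lemma sum_p (hm : 1 ≤ m) (τ : Equiv.Perm (Fin m)) (k : ℤ) :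
    (∑ p : Fin (m+1), if ((lcount (insertMin p τ) : ℤ) = k) then (1:ℤ) else 0)
      = 2 * (lcount τ : ℤ) * (if ((lcount τ : ℤ) = k) then (1:ℤ) else 0)
        + ((m : ℤ) + 1 - 2 * (lcount τ : ℤ)) *
            (if ((lcount τ : ℤ) = k - 1) then (1:ℤ) else 0) := by
  have hptw : ∀ p : Fin (m+1),
      (if ((lcount (insertMin p τ) : ℤ) = k) then (1:ℤ) else 0)
        = (fun j : ℕ => (if (j ∈ (Icc 1 m).filter (fun i => isLocalMin τ i)
              ∨ j + 1 ∈ (Icc 1 m).filter (fun i => isLocalMin τ i))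
            then (if ((lcount τ : ℤ) = k) then (1:ℤ) else 0)
            else (if ((lcount τ : ℤ) = k - 1) then (1:ℤ) else 0))) (p : ℕ) := by
    intro p
    simp only
    rw [show lcount (insertMin p τ) = _ from card_localMin_insertMin hm p τ]
    by_cases hc : ((p:ℕ) ∈ (Icc 1 m).filter (fun i => isLocalMin τ i)
        ∨ (p:ℕ) + 1 ∈ (Icc 1 m).filter (fun i => isLocalMin τ i))
    · rw [if_pos hc, if_pos hc]; rfl
    · rw [if_neg hc, if_neg hc]
      exact if_congr (by push_cast [lcount]; omega) rfl rfl
  rw [Finset.sum_congr rfl (fun p _ => hptw p)]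
  have hre := Fin.sum_univ_eq_sum_range
    (fun j : ℕ => (if (j ∈ (Icc 1 m).filter (fun i => isLocalMin τ i)
              ∨ j + 1 ∈ (Icc 1 m).filter (fun i => isLocalMin τ i))
            then (if ((lcount τ : ℤ) = k) then (1:ℤ) else 0)
            else (if ((lcount τ : ℤ) = k - 1) then (1:ℤ) else 0))) (m+1)
  rw [hre]
  rw [Finset.sum_ite]
  rw [Finset.sum_const, Finset.sum_const]
  have hA := card_adj τ
  have hB := Finset.card_filter_add_card_filter_not
    (s := range (m+1)) (p := fun j => (j ∈ (Icc 1 m).filter (fun i => isLocalMin τ i)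
              ∨ j + 1 ∈ (Icc 1 m).filter (fun i => isLocalMin τ i)))
  rw [hA] at hB
  rw [card_range] at hB
  have hle : 2 * lcount τ ≤ m + 1 := by
    rw [lcount]; omega
  rw [hA]
  rw [show ((range (m+1)).filter fun j => ¬(j ∈ (Icc 1 m).filter (fun i => isLocalMin τ i)
              ∨ j + 1 ∈ (Icc 1 m).filter (fun i => isLocalMin τ i))).card
      = (m + 1) - 2 * lcount τ from by rw [lcount]; omega]
  rw [nsmul_eq_mul, nsmul_eq_mul, Nat.cast_sub hle, lcount]
  push_cast
  ring

end LMR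
end part3
section part4
open Equiv Finset

lemma LMR.numPerms_eq_sum (M : ℕ) (k : ℤ) :
    (numPermsWithLocalMins M k : ℤ)
      = ∑ σ : Equiv.Perm (Fin M), (if ((LMR.lcount σ : ℤ) = k) then (1:ℤ) else 0) := by
  rw [numPermsWithLocalMins, card_filter]
  push_cast
  apply Finset.sum_congr rfl
  intro σ _
  rw [LMR.lcount]

/-- For `n ≥ 2`, `m(n,k) = 2k·m(n-1,k) + (n-2(k-1))·m(n-1,k-1)`. -/
theorem numPermsWithLocalMins_recurrence (n : ℕ) (hn : 2 ≤ n) (k : ℤ) :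
    (numPermsWithLocalMins n k : ℤ) =
      2 * k * numPermsWithLocalMins (n - 1) k +
        ((n : ℤ) - 2 * (k - 1)) * numPermsWithLocalMins (n - 1) (k - 1) := by
  obtain ⟨m, rfl⟩ : ∃ m, n = m + 1 := ⟨n - 1, by omega⟩
  have hm : 1 ≤ m := by omega
  simp only [Nat.add_sub_cancel]
  rw [LMR.numPerms_eq_sum, LMR.numPerms_eq_sum, LMR.numPerms_eq_sum]
  have hbij := Fintype.sum_bijective
    (fun x : Fin (m+1) × Equiv.Perm (Fin m) => LMR.insertMin x.1 x.2)
    LMR.insertMin_bijective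
    (fun x : Fin (m+1) × Equiv.Perm (Fin m) =>
      if ((LMR.lcount (LMR.insertMin x.1 x.2) : ℤ) = k) then (1:ℤ) else 0)
    (fun σ : Equiv.Perm (Fin (m+1)) => if ((LMR.lcount σ : ℤ) = k) then (1:ℤ) else 0)
    (fun x => rfl)
  rw [← hbij, Fintype.sum_prod_type]
  rw [Finset.sum_comm]
  rw [Finset.sum_congr rfl (fun τ _ => LMR.sum_p hm τ k)]
  rw [Finset.sum_add_distrib, Finset.mul_sum, Finset.mul_sum]
  congr 1
  · apply Finset.sum_congr rfl
    intro τ _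
    by_cases hc : ((LMR.lcount τ : ℤ) = k)
    · rw [if_pos hc, hc]
    · rw [if_neg hc]; ring
  · apply Finset.sum_congr rfl
    intro τ _
    by_cases hc : ((LMR.lcount τ : ℤ) = k - 1)
    · rw [if_pos hc, hc]; push_cast; ring
    · rw [if_neg hc]; ring

end part4
end
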